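/- arXiv:2111.15410 — 3 statements merged into one kernel-verified Lean document; each statement's English description precedes it below -/
import Mathlib

section
/- For any subset S ⊆ ℝ^m, the lower Minkowski dimension of S with respect to the quasi-metric induced by the r-quasinorm satisfies dim_r(S) ≥ 1 − r_1(m − dim_H S). -/
/-!
A maximal `δ`-separated subset `F` of a bounded piece `B` of `S` is a `δ`-net for `d_r`, so `B`
is covered by `|F|` boxes with side lengths `2 δ ^ r i`. Since `r i ≤ r₁`, each box splits into
at most `2 ^ m δ ^ (1 - m r₁)` cubes of side `2 δ ^ r₁`. For `t < dim_H B` the Hausdorff measure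
`μH[t] B` is infinite, so these covers force `|F| 2 ^ m δ ^ (1 - m r₁) (2 δ ^ r₁) ^ t ≥ 1` for
small `δ`, i.e. `log N_δ(B) ≥ (1 - r₁ (m - t)) log (1 / δ) - O(1)`. A volume packing bound
`N_δ(B) = O(1 / δ)` keeps the supremum over bounded pieces finite.
-/

open Filter Topology

/-- Maximal cardinality of a `δ`-separated subset of `S` with respect to a quasi-metric `d`. -/
noncomputable def maxSepCard {α : Type*} (d : α → α → ℝ) (δ : ℝ) (S : Set α) : ℕ :=
  sSup {N : ℕ | ∃ F : Finset α, ↑F ⊆ S ∧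
    (∀ x ∈ F, ∀ y ∈ F, x ≠ y → δ ≤ d x y) ∧ F.card = N}

/-- Lower Minkowski dimension of `S` with respect to a quasi-metric `d`:
`liminf_{δ→0⁺} log N_δ / log(1/δ)` over bounded subsets. -/
noncomputable def lowerMinkDim {α : Type*} (d : α → α → ℝ) (S : Set α) : ℝ :=
  ⨆ B : {B : Set α // B ⊆ S ∧ ∃ C : ℝ, ∀ x ∈ B, ∀ y ∈ B, d x y ≤ C},
    Filter.liminf
      (fun δ : ℝ => Real.log ((maxSepCard d δ B.1 : ℕ) : ℝ) / Real.log (1 / δ))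
      (nhdsWithin 0 (Set.Ioi 0))

open MeasureTheory Set ENNReal NNReal

section Minkowski

variable {α : Type*} {d : α → α → ℝ} {δ : ℝ} {S : Set α}

def IsDistSeparated (d : α → α → ℝ) (δ : ℝ) (F : Finset α) : Prop :=
  ∀ x ∈ F, ∀ y ∈ F, x ≠ y → δ ≤ d x y

def sepCards (d : α → α → ℝ) (δ : ℝ) (S : Set α) : Set ℕ :=
  {N | ∃ F : Finset α, ↑F ⊆ S ∧ IsDistSeparated d δ F ∧ F.card = N}

theorem sepCards_nonempty : (sepCards d δ S).Nonempty := ⟨0, ∅, by simp [IsDistSeparated]⟩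

variable {K : ℕ}

theorem bddAbove_sepCards
    (hK : ∀ F : Finset α, ↑F ⊆ S → IsDistSeparated d δ F → F.card ≤ K) :
    BddAbove (sepCards d δ S) :=
  ⟨K, fun _ ⟨F, hFS, hF, hN⟩ => hN ▸ hK F hFS hF⟩

theorem maxSepCard_le
    (hK : ∀ F : Finset α, ↑F ⊆ S → IsDistSeparated d δ F → F.card ≤ K) :
    maxSepCard d δ S ≤ K :=
  csSup_le sepCards_nonempty fun _ ⟨F, hFS, hF, hN⟩ => hN ▸ hK F hFS hF

theorem exists_card_eq_maxSepCard_cover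
    (hK : ∀ F : Finset α, ↑F ⊆ S → IsDistSeparated d δ F → F.card ≤ K)
    (hsymm : ∀ x y, d x y = d y x) (hself : ∀ x, d x x < δ) :
    ∃ F : Finset α, F.card = maxSepCard d δ S ∧ ∀ z ∈ S, ∃ x ∈ F, d z x < δ := by
  classical
  obtain ⟨F, hFS, hF, hcard⟩ := Nat.sSup_mem sepCards_nonempty (bddAbove_sepCards hK)
  refine ⟨F, hcard, fun z hz => ?_⟩
  by_contra! hfar
  have hzF : z ∉ F := fun hzF => (hfar z hzF).not_gt (hself z)
  have hlarger : (insert z F).card ∈ sepCards d δ S := by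
    refine ⟨insert z F, by simpa only [Finset.coe_insert] using insert_subset hz hFS, ?_, rfl⟩
    simp only [IsDistSeparated, Finset.mem_insert]
    rintro x (rfl | hx) y (rfl | hy) hxy
    · exact absurd rfl hxy
    · exact hfar y hy
    · exact hsymm x y ▸ hfar x hx
    · exact hF x hx y hy hxy
  have := le_csSup (bddAbove_sepCards hK) hlarger
  rw [Finset.card_insert_of_notMem hzF, ← hcard] at this
  omega

noncomputable def minkRatio (d : α → α → ℝ) (B : Set α) (δ : ℝ) : ℝ :=
  Real.log (maxSepCard d δ B) / Real.log (1 / δ)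

theorem eventually_minkRatio_nonneg : ∀ᶠ δ in 𝓝[>] 0, 0 ≤ minkRatio d S δ :=
  eventually_of_mem (Ioo_mem_nhdsGT one_pos) fun _ hδ =>
    div_nonneg (Real.log_natCast_nonneg _) (Real.log_nonneg (one_le_one_div hδ.1 hδ.2.le))

/-- Without the uniform bound `M`, the real supremum in `lowerMinkDim` is the junk value `0`. -/
theorem le_lowerMinkDim {M c : ℝ} {B : Set α} {g : ℝ → ℝ}
    (hM : ∀ B ⊆ S, (∃ C, ∀ x ∈ B, ∀ y ∈ B, d x y ≤ C) → ∀ᶠ δ in 𝓝[>] 0, minkRatio d B δ ≤ M)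
    (hBS : B ⊆ S) (hB : ∃ C, ∀ x ∈ B, ∀ y ∈ B, d x y ≤ C)
    (hg : Tendsto g (𝓝[>] 0) (𝓝 c)) (hgB : ∀ᶠ δ in 𝓝[>] 0, g δ ≤ minkRatio d B δ) :
    c ≤ lowerMinkDim d S := by
  have hbdd : BddAbove (range fun B : {B : Set α // B ⊆ S ∧ ∃ C, ∀ x ∈ B, ∀ y ∈ B, d x y ≤ C} =>
      liminf (minkRatio d B.1) (𝓝[>] 0)) :=
    ⟨M, forall_mem_range.2 fun B => liminf_le_of_frequently_le
      (hM B.1 B.2.1 B.2.2).frequently (isBoundedUnder_of_eventually_ge eventually_minkRatio_nonneg)⟩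
  calc c = liminf g (𝓝[>] 0) := hg.liminf_eq.symm
    _ ≤ liminf (minkRatio d B) (𝓝[>] 0) :=
      liminf_le_liminf hgB hg.isBoundedUnder_ge
        (isCoboundedUnder_ge_of_eventually_le _ (hM B hBS hB))
    _ ≤ lowerMinkDim d S := le_ciSup hbdd ⟨B, hBS, hB⟩

theorem lowerMinkDim_nonneg {M : ℝ}
    (hM : ∀ B ⊆ S, (∃ C, ∀ x ∈ B, ∀ y ∈ B, d x y ≤ C) → ∀ᶠ δ in 𝓝[>] 0, minkRatio d B δ ≤ M) :
    0 ≤ lowerMinkDim d S :=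
  le_lowerMinkDim hM (empty_subset S) ⟨0, by simp⟩ tendsto_const_nhds eventually_minkRatio_nonneg

end Minkowski

theorem sub_div_log_le_log_div_log {N A δ c : ℝ} (hA : 0 < A) (hδ : 0 < δ) (hδ1 : δ < 1)
    (h : 1 ≤ N * A * δ ^ c) :
    c - Real.log A / Real.log (1 / δ) ≤ Real.log N / Real.log (1 / δ) := by
  have hL : 0 < Real.log (1 / δ) := Real.log_pos (one_lt_one_div hδ hδ1)
  have hN : 0 < N := pos_of_mul_pos_left (pos_of_mul_pos_left (one_pos.trans_le h)
    (Real.rpow_pos_of_pos hδ c).le) hA.le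
  have hlog := Real.log_nonneg h
  rw [Real.log_mul (by positivity) (Real.rpow_pos_of_pos hδ c).ne', Real.log_mul hN.ne' hA.ne',
    Real.log_rpow hδ] at hlog
  rw [one_div, Real.log_inv] at hL ⊢
  rw [sub_le_iff_le_add, ← add_div, le_div_iff₀ hL]
  linarith

theorem eventually_one_le_mul_rpow_of_hausdorffMeasure_eq_top {X β : Type*} [EMetricSpace X]
    [MeasurableSpace X] [BorelSpace X] {s : ℝ} (hs : 0 ≤ s) {B : Set X} (hB : μH[s] B = ∞)
    {l : Filter β} [l.NeBot] {ρ N : β → ℝ} (hρ : Tendsto ρ l (𝓝 0)) (hρ0 : ∀ᶠ b in l, 0 ≤ ρ b)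
    (hcov : ∀ᶠ b in l, ∃ T : Finset (Set X), (T.card : ℝ) ≤ N b ∧ B ⊆ ⋃₀ ↑T ∧
      ∀ t ∈ T, Metric.ediam t ≤ ENNReal.ofReal (ρ b)) :
    ∀ᶠ b in l, 1 ≤ N b * ρ b ^ s := by
  obtain ⟨T, hT⟩ := hcov.choice
  have hle := Measure.hausdorffMeasure_le_liminf_sum s B (fun b => ENNReal.ofReal (ρ b))
    (by simpa using ENNReal.tendsto_ofReal hρ) (fun b (t : T b) => (t : Set X))
    (hT.mono fun b hb t => hb.2.2 t t.2)
    (hT.mono fun b hb => by simpa [sUnion_eq_iUnion] using hb.2.1)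
  rw [hB, top_le_iff] at hle
  filter_upwards [eventually_lt_of_lt_liminf (hle ▸ one_lt_top), hT, hρ0] with b hsum hb hρb
  have hsum_le : ∑ t : T b, Metric.ediam (t : Set X) ^ s ≤ ENNReal.ofReal (N b * ρ b ^ s) := by
    calc ∑ t : T b, Metric.ediam (t : Set X) ^ s
        ≤ ∑ _t : T b, ENNReal.ofReal (ρ b) ^ s :=
          Finset.sum_le_sum fun t _ => ENNReal.rpow_le_rpow (hb.2.2 t t.2) hs
      _ = ENNReal.ofReal ((T b).card * ρ b ^ s) := by
          rw [Finset.sum_const, Finset.card_univ, Fintype.card_coe, nsmul_eq_mul,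
            ENNReal.ofReal_rpow_of_nonneg hρb hs, ENNReal.ofReal_mul (by positivity),
            ENNReal.ofReal_natCast]
      _ ≤ ENNReal.ofReal (N b * ρ b ^ s) :=
          ENNReal.ofReal_le_ofReal (mul_le_mul_of_nonneg_right hb.1 (by positivity))
  exact (ENNReal.one_lt_ofReal.1 (hsum.trans_le hsum_le)).le

theorem card_mul_le_measure_of_pairwiseDisjoint {X κ : Type*} [MeasurableSpace X] {μ : Measure X}
    {F : Finset κ} {s : κ → Set X} {t : Set X} {v : ℝ≥0∞}
    (hdisj : (F : Set κ).PairwiseDisjoint s) (hmeas : ∀ x ∈ F, MeasurableSet (s x))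
    (hv : ∀ x ∈ F, v ≤ μ (s x)) (hst : ∀ x ∈ F, s x ⊆ t) :
    F.card * v ≤ μ t :=
  calc (F.card : ℝ≥0∞) * v = ∑ _x ∈ F, v := by rw [Finset.sum_const, nsmul_eq_mul]
    _ ≤ ∑ x ∈ F, μ (s x) := Finset.sum_le_sum hv
    _ = μ (⋃ x ∈ F, s x) := (measure_biUnion_finset hdisj hmeas).symm
    _ ≤ μ t := measure_mono (iUnion₂_subset hst)

theorem exists_lt_ceil_abs_sub_le {a ℓ ρ z : ℝ} (hρ : 0 < ρ) (hz : |z - a| < ℓ) :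
    ∃ j < ⌈ℓ / ρ⌉₊, |z - (a - ℓ + (2 * j + 1) * ρ)| ≤ ρ := by
  have hza := abs_lt.1 hz
  have hy : 0 ≤ (z - a + ℓ) / (2 * ρ) := div_nonneg (by linarith) (by positivity)
  refine ⟨⌊(z - a + ℓ) / (2 * ρ)⌋₊, ?_, ?_⟩
  · rw [Nat.floor_lt hy]
    refine lt_of_lt_of_le ?_ (Nat.le_ceil _)
    rw [div_lt_div_iff₀ (by positivity) hρ]
    nlinarith
  · have h1 := Nat.floor_le hy
    have h2 := Nat.lt_floor_add_one ((z - a + ℓ) / (2 * ρ))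
    rw [le_div_iff₀ (by positivity)] at h1
    rw [div_lt_iff₀ (by positivity)] at h2
    rw [abs_le]
    constructor <;> nlinarith

section Quasinorm

variable {ι : Type*} [Fintype ι]

theorem prod_rpow_of_sum_eq_one {r : ι → ℝ} (hrsum : ∑ i, r i = 1) {a : ℝ} (ha : 0 < a) :
    ∏ i, a ^ r i = a := by
  rw [← Real.rpow_sum_of_pos ha, hrsum, Real.rpow_one]

theorem exists_finset_cover_box (x ℓ : ι → ℝ) {ρ : ℝ} (hρ : 0 < ρ) :
    ∃ T : Finset (ι → ℝ), T.card ≤ ∏ i, ⌈ℓ i / ρ⌉₊ ∧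
      ∀ z, (∀ i, |z i - x i| < ℓ i) → ∃ c ∈ T, dist z c ≤ ρ := by
  classical
  refine ⟨(Fintype.piFinset fun i => Finset.range ⌈ℓ i / ρ⌉₊).image
    fun j i => x i - ℓ i + (2 * j i + 1) * ρ, ?_, fun z hz => ?_⟩
  · exact Finset.card_image_le.trans (by simp)
  · choose j hj hjz using fun i => exists_lt_ceil_abs_sub_le hρ (hz i)
    exact ⟨_, Finset.mem_image_of_mem _ (Fintype.mem_piFinset.2 fun i => Finset.mem_range.2 (hj i)),
      (dist_pi_le_iff hρ.le).2 fun i => (Real.dist_eq _ _).trans_le (hjz i)⟩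

variable [Nonempty ι] {r : ι → ℝ}

noncomputable def rDist (r : ι → ℝ) (x y : ι → ℝ) : ℝ :=
  Finset.univ.sup' Finset.univ_nonempty fun i => |x i - y i| ^ (r i)⁻¹

theorem rDist_comm (x y : ι → ℝ) : rDist r x y = rDist r y x := by
  simp only [rDist, abs_sub_comm]

theorem rDist_lt_iff (hr : ∀ i, 0 < r i) {x y : ι → ℝ} {δ : ℝ} (hδ : 0 < δ) :
    rDist r x y < δ ↔ ∀ i, |x i - y i| < δ ^ r i := by
  simp only [rDist, Finset.sup'_lt_iff, Finset.mem_univ, true_imp_iff,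
    Real.rpow_inv_lt_iff_of_pos (abs_nonneg _) hδ.le (hr _)]

theorem rDist_le_iff (hr : ∀ i, 0 < r i) {x y : ι → ℝ} {δ : ℝ} (hδ : 0 < δ) :
    rDist r x y ≤ δ ↔ ∀ i, |x i - y i| ≤ δ ^ r i := by
  simp only [rDist, Finset.sup'_le_iff, Finset.mem_univ, true_imp_iff,
    Real.rpow_inv_le_iff_of_pos (abs_nonneg _) hδ.le (hr _)]

theorem le_rDist_iff (hr : ∀ i, 0 < r i) {x y : ι → ℝ} {δ : ℝ} (hδ : 0 < δ) :
    δ ≤ rDist r x y ↔ ∃ i, δ ^ r i ≤ |x i - y i| := by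
  simpa only [not_lt, not_forall] using (rDist_lt_iff hr hδ).not

theorem rDist_self_lt (hr : ∀ i, 0 < r i) (x : ι → ℝ) {δ : ℝ} (hδ : 0 < δ) : rDist r x x < δ :=
  (rDist_lt_iff hr hδ).2 fun i => by simpa using Real.rpow_pos_of_pos hδ (r i)

theorem exists_rDist_le_of_isBounded (hr : ∀ i, 0 < r i) {B : Set (ι → ℝ)}
    (hB : Bornology.IsBounded B) :
    ∃ C, ∀ x ∈ B, ∀ y ∈ B, rDist r x y ≤ C := by
  obtain ⟨D, hD⟩ := Metric.isBounded_iff.1 hB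
  refine ⟨Finset.univ.sup' Finset.univ_nonempty fun i => D ^ (r i)⁻¹,
    fun x hx y hy => Finset.sup'_mono_fun fun i _ => ?_⟩
  exact Real.rpow_le_rpow (abs_nonneg _)
    (((Real.dist_eq _ _).symm.trans_le (dist_le_pi_dist x y i)).trans (hD hx hy))
    (inv_nonneg.2 (hr i).le)

/-- The boxes of side lengths `δ ^ r i` around the points of `F` are disjoint,
have volume `δ`, and lie in one box of volume at most `4 ^ card ι * C`. -/
theorem card_mul_le_of_isDistSeparated_rDist (hr : ∀ i, 0 < r i) (hrsum : ∑ i, r i = 1) {δ C : ℝ}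
    (hδ : 0 < δ) (hδ1 : δ ≤ 1) (hC : 1 ≤ C) {F : Finset (ι → ℝ)}
    (hsep : IsDistSeparated (rDist r) δ F) (hF : ∀ x ∈ F, ∀ y ∈ F, rDist r x y ≤ C) :
    (F.card : ℝ) * δ ≤ 4 ^ Fintype.card ι * C := by
  rcases F.eq_empty_or_nonempty with rfl | ⟨x₀, hx₀⟩
  · simp only [Finset.card_empty, Nat.cast_zero, zero_mul]
    positivity
  let box : (ι → ℝ) → Set (ι → ℝ) := fun x =>
    univ.pi fun i => Ioo (x i - δ ^ r i / 2) (x i + δ ^ r i / 2)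
  let big : Set (ι → ℝ) := univ.pi fun i => Icc (x₀ i - (C ^ r i + 1)) (x₀ i + (C ^ r i + 1))
  have hbox_vol (x : ι → ℝ) : volume (box x) = ENNReal.ofReal δ := by
    simp only [box, Real.volume_pi_Ioo, add_sub_sub_cancel, add_halves,
      ← ENNReal.ofReal_prod_of_nonneg fun i _ => (Real.rpow_pos_of_pos hδ (r i)).le,
      prod_rpow_of_sum_eq_one hrsum hδ]
  have hdisj : (F : Set (ι → ℝ)).PairwiseDisjoint box := by
    intro x hx y hy hxy
    obtain ⟨i, hi⟩ := (le_rDist_iff hr hδ).1 (hsep x hx y hy hxy)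
    refine Set.disjoint_left.2 fun z hzx hzy => ?_
    have h1 := mem_Ioo.1 (hzx i (mem_univ i))
    have h2 := mem_Ioo.1 (hzy i (mem_univ i))
    have : |x i - y i| < δ ^ r i := abs_sub_lt_iff.2 ⟨by linarith, by linarith⟩
    linarith
  have hsub : ∀ x ∈ F, box x ⊆ big := by
    intro x hx z hz i _
    have h1 := mem_Ioo.1 (hz i (mem_univ i))
    have h2 := abs_le.1 ((rDist_le_iff hr (zero_lt_one.trans_le hC)).1 (hF x hx x₀ hx₀) i)
    have h3 : δ ^ r i ≤ 1 := Real.rpow_le_one hδ.le hδ1 (hr i).le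
    constructor <;> linarith
  have hbig_vol : volume big ≤ ENNReal.ofReal (4 ^ Fintype.card ι * C) := by
    have hC₀ : 0 < C := zero_lt_one.trans_le hC
    calc volume big = ∏ i, ENNReal.ofReal (2 * (C ^ r i + 1)) := by
          simp only [big, volume_pi_pi, Real.volume_Icc]
          ring_nf
      _ ≤ ∏ i, ENNReal.ofReal (4 * C ^ r i) :=
          Finset.prod_le_prod' fun i _ => ENNReal.ofReal_le_ofReal <| by
            linarith [Real.one_le_rpow hC (hr i).le]
      _ = ENNReal.ofReal (4 ^ Fintype.card ι * C) := by
          rw [← ENNReal.ofReal_prod_of_nonneg fun i _ => by positivity, Finset.prod_mul_distrib,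
            prod_rpow_of_sum_eq_one hrsum hC₀, Finset.prod_const, Finset.card_univ]
  have hvol := card_mul_le_measure_of_pairwiseDisjoint hdisj
    (fun x _ => MeasurableSet.univ_pi fun _ => measurableSet_Ioo) (fun x _ => (hbox_vol x).ge) hsub
  rw [← ENNReal.ofReal_natCast, ← ENNReal.ofReal_mul (Nat.cast_nonneg _)] at hvol
  exact (ENNReal.ofReal_le_ofReal_iff (by positivity)).1 (hvol.trans hbig_vol)

theorem card_le_of_isDistSeparated_rDist (hr : ∀ i, 0 < r i) (hrsum : ∑ i, r i = 1)
    {B : Set (ι → ℝ)} {δ C : ℝ} (hδ : 0 < δ) (hδ1 : δ ≤ 1) (hC : 1 ≤ C)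
    (hB : ∀ x ∈ B, ∀ y ∈ B, rDist r x y ≤ C)
    (F : Finset (ι → ℝ)) (hFB : ↑F ⊆ B) (hsep : IsDistSeparated (rDist r) δ F) :
    F.card ≤ ⌊4 ^ Fintype.card ι * C / δ⌋₊ :=
  Nat.le_floor <| (le_div_iff₀ hδ).2 <|
    card_mul_le_of_isDistSeparated_rDist hr hrsum hδ hδ1 hC hsep fun x hx y hy =>
      hB x (hFB hx) y (hFB hy)

theorem eventually_minkRatio_rDist_le_two (hr : ∀ i, 0 < r i) (hrsum : ∑ i, r i = 1)
    {B : Set (ι → ℝ)} (hB : ∃ C, ∀ x ∈ B, ∀ y ∈ B, rDist r x y ≤ C) :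
    ∀ᶠ δ in 𝓝[>] 0, minkRatio (rDist r) B δ ≤ 2 := by
  obtain ⟨C, hC⟩ := hB
  set K := 4 ^ Fintype.card ι * max C 1
  have hK : 1 ≤ K := one_le_mul_of_one_le_of_one_le (one_le_pow₀ (by norm_num)) (le_max_right _ _)
  filter_upwards [Ioo_mem_nhdsGT (inv_pos.2 (zero_lt_one.trans_le hK))] with δ ⟨hδ, hδK⟩
  have hδ1 : δ < 1 := hδK.trans_le (inv_le_one_of_one_le₀ hK)
  have hL : 0 < Real.log (1 / δ) := Real.log_pos (one_lt_one_div hδ hδ1)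
  have hN : (maxSepCard (rDist r) δ B : ℝ) ≤ (1 / δ) ^ 2 :=
    calc (maxSepCard (rDist r) δ B : ℝ) ≤ K / δ :=
          (Nat.cast_le.2 (maxSepCard_le (card_le_of_isDistSeparated_rDist hr hrsum hδ hδ1.le
            (le_max_right _ _) fun x hx y hy => (hC x hx y hy).trans (le_max_left _ _)))).trans
            (Nat.floor_le (by positivity))
      _ ≤ (1 / δ) ^ 2 := by
          rw [sq, one_div, div_eq_mul_inv]
          exact mul_le_mul_of_nonneg_right ((lt_inv_comm₀ hδ (by positivity)).1 hδK).le
            (by positivity)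
  rw [minkRatio, div_le_iff₀ hL]
  rcases (maxSepCard (rDist r) δ B).eq_zero_or_pos with h0 | hpos
  · rw [h0, Nat.cast_zero, Real.log_zero]
    positivity
  · calc Real.log (maxSepCard (rDist r) δ B) ≤ Real.log ((1 / δ) ^ 2) :=
          Real.log_le_log (by exact_mod_cast hpos) hN
      _ = 2 * Real.log (1 / δ) := by rw [Real.log_pow, Nat.cast_ofNat]

theorem exists_finset_cover_rDist_lt (hr : ∀ i, 0 < r i) (hrsum : ∑ i, r i = 1) {i₀ : ι}
    (hr₀ : ∀ i, r i ≤ r i₀) {δ : ℝ} (hδ : 0 < δ) (hδ1 : δ ≤ 1) (x : ι → ℝ) :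
    ∃ T : Finset (ι → ℝ), (T.card : ℝ) ≤ 2 ^ Fintype.card ι * δ ^ (1 - Fintype.card ι * r i₀) ∧
      ∀ z, rDist r z x < δ → ∃ c ∈ T, dist z c ≤ δ ^ r i₀ := by
  obtain ⟨T, hTcard, hT⟩ :=
    exists_finset_cover_box x (fun i => δ ^ r i) (Real.rpow_pos_of_pos hδ (r i₀))
  refine ⟨T, ?_, fun z hz => hT z ((rDist_lt_iff hr hδ).1 hz)⟩
  have hceil (i : ι) : (⌈δ ^ r i / δ ^ r i₀⌉₊ : ℝ) ≤ 2 * δ ^ (r i - r i₀) := by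
    rw [← Real.rpow_sub hδ]
    have : 1 ≤ δ ^ (r i - r i₀) :=
      Real.one_le_rpow_of_pos_of_le_one_of_nonpos hδ hδ1 (sub_nonpos.2 (hr₀ i))
    linarith [Nat.ceil_lt_add_one (zero_le_one.trans this)]
  calc (T.card : ℝ) ≤ ∏ i, (⌈δ ^ r i / δ ^ r i₀⌉₊ : ℝ) := by exact_mod_cast hTcard
    _ ≤ ∏ i, 2 * δ ^ (r i - r i₀) :=
      Finset.prod_le_prod (fun _ _ => by positivity) fun i _ => hceil i
    _ = 2 ^ Fintype.card ι * δ ^ (1 - Fintype.card ι * r i₀) := by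
      rw [Finset.prod_mul_distrib, Finset.prod_const, Finset.card_univ, ← Real.rpow_sum_of_pos hδ,
        Finset.sum_sub_distrib, hrsum, Finset.sum_const, Finset.card_univ, nsmul_eq_mul]

/-- The `δ`-balls around a maximal `δ`-separated subset of `B`, each cut into sup-norm balls of
radius `δ ^ r i₀`. -/
theorem exists_finset_cover_of_rDist_le (hr : ∀ i, 0 < r i) (hrsum : ∑ i, r i = 1) {i₀ : ι}
    (hr₀ : ∀ i, r i ≤ r i₀) {B : Set (ι → ℝ)} {δ C : ℝ} (hδ : 0 < δ) (hδ1 : δ ≤ 1) (hC : 1 ≤ C)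
    (hB : ∀ x ∈ B, ∀ y ∈ B, rDist r x y ≤ C) :
    ∃ T : Finset (Set (ι → ℝ)), (T.card : ℝ) ≤
        maxSepCard (rDist r) δ B * (2 ^ Fintype.card ι * δ ^ (1 - Fintype.card ι * r i₀)) ∧
      B ⊆ ⋃₀ ↑T ∧ ∀ t ∈ T, Metric.ediam t ≤ ENNReal.ofReal (2 * δ ^ r i₀) := by
  classical
  obtain ⟨F, hFcard, hFcov⟩ := exists_card_eq_maxSepCard_cover
    (card_le_of_isDistSeparated_rDist hr hrsum hδ hδ1 hC hB) rDist_comm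
    fun x => rDist_self_lt hr x hδ
  choose T hTcard hTcov using exists_finset_cover_rDist_lt hr hrsum hr₀ hδ hδ1
  refine ⟨(F.biUnion T).image fun c => Metric.closedBall c (δ ^ r i₀), ?_, fun z hz => ?_, ?_⟩
  · calc (((F.biUnion T).image fun c => Metric.closedBall c (δ ^ r i₀)).card : ℝ)
        ≤ ∑ x ∈ F, ((T x).card : ℝ) := by
          exact_mod_cast Finset.card_image_le.trans Finset.card_biUnion_le
      _ ≤ ∑ _x ∈ F, 2 ^ Fintype.card ι * δ ^ (1 - Fintype.card ι * r i₀) :=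
          Finset.sum_le_sum fun x _ => hTcard x
      _ = _ := by rw [Finset.sum_const, nsmul_eq_mul, hFcard]
  · obtain ⟨x, hx, hzx⟩ := hFcov z hz
    obtain ⟨c, hc, hzc⟩ := hTcov x z hzx
    exact mem_sUnion.2 ⟨_, Finset.mem_coe.2 (Finset.mem_image_of_mem _
      (Finset.mem_biUnion.2 ⟨x, hx, hc⟩)), Metric.mem_closedBall.2 hzc⟩
  · simp only [Finset.mem_image]
    rintro _ ⟨c, -, rfl⟩
    rw [← Metric.closedEBall_ofReal (Real.rpow_pos_of_pos hδ _).le, ENNReal.ofReal_mul zero_le_two,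
      ENNReal.ofReal_ofNat]
    exact Metric.ediam_closedEBall_le

theorem eventually_le_minkRatio_rDist (hr : ∀ i, 0 < r i) (hrsum : ∑ i, r i = 1) {i₀ : ι}
    (hr₀ : ∀ i, r i ≤ r i₀) {B : Set (ι → ℝ)} {C : ℝ} (hC : 1 ≤ C)
    (hB : ∀ x ∈ B, ∀ y ∈ B, rDist r x y ≤ C) {s : ℝ} (hs : 0 ≤ s) (hμ : μH[s] B = ∞) :
    ∀ᶠ δ in 𝓝[>] 0, 1 - r i₀ * (Fintype.card ι - s) -
      Real.log (2 ^ (Fintype.card ι + s)) / Real.log (1 / δ) ≤ minkRatio (rDist r) B δ := by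
  have hρ : Tendsto (fun δ : ℝ => 2 * δ ^ r i₀) (𝓝[>] 0) (𝓝 0) := by
    simpa [Real.zero_rpow (hr i₀).ne'] using
      ((Real.continuousAt_rpow_const 0 (r i₀) (Or.inr (hr i₀).le)).tendsto.mono_left
        nhdsWithin_le_nhds).const_mul 2
  have hsmall : Ioo (0 : ℝ) 1 ∈ 𝓝[>] 0 := Ioo_mem_nhdsGT one_pos
  filter_upwards [eventually_one_le_mul_rpow_of_hausdorffMeasure_eq_top hs hμ hρ
      (eventually_of_mem hsmall fun δ hδ => (mul_pos two_pos (Real.rpow_pos_of_pos hδ.1 _)).le)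
      (eventually_of_mem hsmall fun δ hδ =>
        exists_finset_cover_of_rDist_le hr hrsum hr₀ hδ.1 hδ.2.le hC hB), hsmall]
    with δ hcount hδ
  refine sub_div_log_le_log_div_log (by positivity) hδ.1 hδ.2 ?_
  convert hcount using 1
  rw [Real.rpow_add two_pos, Real.rpow_natCast,
    Real.mul_rpow zero_le_two (Real.rpow_pos_of_pos hδ.1 _).le,
    ← Real.rpow_mul hδ.1.le, show 1 - r i₀ * (Fintype.card ι - s) =
      1 - Fintype.card ι * r i₀ + r i₀ * s by ring, Real.rpow_add hδ.1]
  ring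

theorem le_lowerMinkDim_rDist (hr : ∀ i, 0 < r i) (hrsum : ∑ i, r i = 1) {i₀ : ι}
    (hr₀ : ∀ i, r i ≤ r i₀) {S B : Set (ι → ℝ)} (hBS : B ⊆ S) (hB : Bornology.IsBounded B)
    {s : ℝ} (hs : 0 ≤ s) (hμ : μH[s] B = ∞) :
    1 - r i₀ * (Fintype.card ι - s) ≤ lowerMinkDim (rDist r) S := by
  obtain ⟨C, hC⟩ := exists_rDist_le_of_isBounded hr hB
  have hL : Tendsto (fun δ : ℝ => Real.log (1 / δ)) (𝓝[>] 0) atTop := by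
    simp only [one_div, Real.log_inv]
    exact tendsto_neg_atBot_atTop.comp Real.tendsto_log_nhdsGT_zero
  have hg := (tendsto_const_nhds (x := Real.log (2 ^ (Fintype.card ι + s)))).div_atTop hL
    |>.const_sub (1 - r i₀ * (Fintype.card ι - s))
  rw [sub_zero] at hg
  refine le_lowerMinkDim (fun B _ hB => eventually_minkRatio_rDist_le_two hr hrsum hB) hBS
    ⟨C, hC⟩ hg (eventually_le_minkRatio_rDist hr hrsum hr₀ (le_max_right C 1)
      (fun x hx y hy => (hC x hx y hy).trans (le_max_left _ _)) hs hμ)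

theorem lowerMinkDim_rDist_ge (hr : ∀ i, 0 < r i) (hrsum : ∑ i, r i = 1) {i₀ : ι}
    (hr₀ : ∀ i, r i ≤ r i₀) (S : Set (ι → ℝ)) :
    1 - r i₀ * (Fintype.card ι - (dimH S).toReal) ≤ lowerMinkDim (rDist r) S := by
  have hL : 0 ≤ lowerMinkDim (rDist r) S :=
    lowerMinkDim_nonneg fun B _ hB => eventually_minkRatio_rDist_le_two hr hrsum hB
  have hcard : 1 ≤ Fintype.card ι * r i₀ :=
    calc (1 : ℝ) = ∑ i, r i := hrsum.symm
      _ ≤ ∑ _i : ι, r i₀ := Finset.sum_le_sum fun i _ => hr₀ i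
      _ = Fintype.card ι * r i₀ := by simp
  have hpiece (t : ℝ≥0) (ht : (t : ℝ≥0∞) < dimH S) :
      1 - r i₀ * (Fintype.card ι - t) ≤ lowerMinkDim (rDist r) S := by
    obtain ⟨n, hn⟩ : ∃ n : ℕ, (t : ℝ≥0∞) < dimH (S ∩ Metric.closedBall 0 n) := by
      rwa [← lt_iSup_iff, ← dimH_iUnion, ← inter_iUnion, Metric.iUnion_closedBall_nat, inter_univ]
    exact le_lowerMinkDim_rDist hr hrsum hr₀ inter_subset_left
      (Metric.isBounded_closedBall.subset inter_subset_right) t.coe_nonneg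
      (hausdorffMeasure_of_lt_dimH hn)
  have hdim : dimH S ≤
      ENNReal.ofReal (Fintype.card ι - (1 - lowerMinkDim (rDist r) S) / r i₀) :=
    ENNReal.le_of_forall_nnreal_lt fun t ht => by
      rw [← ENNReal.ofReal_coe_nnreal]
      exact ENNReal.ofReal_le_ofReal <| by
        rw [le_sub_comm, div_le_iff₀ (hr i₀)]
        linarith [hpiece t ht]
  have := ENNReal.toReal_le_of_le_ofReal (by rw [sub_nonneg, div_le_iff₀ (hr i₀)]; linarith) hdim
  rw [le_sub_comm, div_le_iff₀ (hr i₀)] at this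
  linarith

/-- `dim_r(S) ≥ 1 − r_1 (m − dim_H S)` for `S ⊆ ℝ^m`. -/
theorem lowerMinkDim_r_ge {m : ℕ} (hm : 0 < m) (r : Fin m → ℝ)
    (hrpos : ∀ i, 0 < r i)
    (hrmono : ∀ i i' : Fin m, i ≤ i' → r i' ≤ r i)
    (hrsum : ∑ i, r i = 1)
    (S : Set (Fin m → ℝ)) :
    1 - r ⟨0, hm⟩ * ((m : ℝ) - (dimH S).toReal) ≤
      lowerMinkDim
        (fun x y => Finset.univ.sup'
          (Finset.univ_nonempty_iff.mpr (Fin.pos_iff_nonempty.mp hm))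
          (fun i => |x i - y i| ^ (r i)⁻¹)) S := by
  have : Nonempty (Fin m) := ⟨⟨0, hm⟩⟩
  have := lowerMinkDim_rDist_ge hrpos hrsum (fun i => hrmono ⟨0, hm⟩ i (Nat.zero_le _)) S
  rwa [Fintype.card_fin] at this
end Quasinorm
end

section
/- A matrix A ∈ M_{m,n}(ℝ) is singular on average if and only if its transpose A^T ∈ M_{n,m}(ℝ) is singular on average. -/
open Filter Topology

/-- The weighted `w`-quasinorm `‖x‖_w = max_i |x_i|^{1/w_i}` on `ℝ^k`. -/
noncomputable def qnorm {k : ℕ} (hk : 0 < k) (w : Fin k → ℝ) (x : Fin k → ℝ) : ℝ :=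
  Finset.univ.sup' (Finset.univ_nonempty_iff.mpr (Fin.pos_iff_nonempty.mp hk))
    (fun i => |x i| ^ (w i)⁻¹)

/-- `⟨x⟩_w = inf_{p ∈ ℤ^k} ‖x − p‖_w`, the quasinorm distance to the integer lattice. -/
noncomputable def idist {k : ℕ} (hk : 0 < k) (w : Fin k → ℝ) (x : Fin k → ℝ) : ℝ :=
  ⨅ p : Fin k → ℤ, qnorm hk w (fun i => x i - (p i : ℝ))

/-- `A ∈ M_{m,n}(ℝ)` is singular on average (with weights `r`, `s`). -/
noncomputable def SingularOnAverage {m n : ℕ} (hm : 0 < m) (hn : 0 < n)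
    (r : Fin m → ℝ) (s : Fin n → ℝ) (A : Matrix (Fin m) (Fin n) ℝ) : Prop :=
  ∀ ε : ℝ, 0 < ε →
    Filter.Tendsto (fun N : ℕ =>
      (({l : ℕ | 1 ≤ l ∧ l ≤ N ∧ ∃ q : Fin n → ℤ,
          idist hm r (fun i => ∑ j, A i j * (q j : ℝ)) < ε * 2 ^ (-(l : ℝ)) ∧
          0 < qnorm hn s (fun j => (q j : ℝ)) ∧
          qnorm hn s (fun j => (q j : ℝ)) < 2 ^ (l : ℝ)}.ncard : ℝ) / N))
      Filter.atTop (𝓝 1)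

/-!
Transference. Fix `t = ℓ + K` and rescale `ℤ^m × ℤ^n` by the unimodular matrix
`M (u, v) = (2^{-t r} u, 2^{t s} (v - Aᵀ u))`. A good approximation `q` of `A` at level `ℓ`,
with `ε = 2^{-2K}`, gives the nonzero integer vector `ψ = (-p, q)` whose dual coordinates
`φ = ψ M⁻¹ = (2^{t r} (A q - p), 2^{-t s} q)` are all at most some `ρ` tending to `0` with
`K`. Let `k₀` be the largest coordinate of `φ` and replace row `k₀` of `M` by `φ M = ψ`.
Minkowski's theorem for this system of linear forms, with bound `1/2` on row `k₀` and `μ` on the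
others, where `μ^{m+n-1} > 2ρ`, yields `x ≠ 0` with `⟨φ, M x⟩ = ⟨ψ, x⟩ = 0` (an integer of size
at most `1/2`); this linear relation bounds the remaining coordinate of `M x` by `(m + n - 1) μ`. So `x = (p', q')` is a good approximation of `Aᵀ` at
level `ℓ + K`, and shifting levels by a fixed `K` preserves density one.
-/

open MeasureTheory Matrix

section Minkowski

variable {ι : Type*} [Fintype ι]

theorem exists_intCast_eq_of_mem_span_basisFun {y : ι → ℝ}
    (hy : y ∈ Submodule.span ℤ (Set.range (Pi.basisFun ℝ ι))) :
    ∃ x : ι → ℤ, Int.cast ∘ x = y := by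
  have hcoord (k : ι) : ∃ z : ℤ, (z : ℝ) = y k := by
    simpa using ((Pi.basisFun ℝ ι).mem_span_iff_repr_mem ℤ y).1 hy k
  choose x hx using hcoord
  exact ⟨x, funext hx⟩

variable [DecidableEq ι]

theorem Matrix.exists_int_ne_zero_abs_mulVec_le (T : Matrix ι ι ℝ) (hT : T.det ≠ 0)
    (b : ι → ℝ) (hb : ∀ k, 0 < b k) (hvol : 2 ^ Fintype.card ι * |T.det| < ∏ k, 2 * b k) :
    ∃ x : ι → ℤ, x ≠ 0 ∧ ∀ k, |(T *ᵥ (Int.cast ∘ x)) k| ≤ b k := by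
  set box : Set (ι → ℝ) := Set.univ.pi fun k => Set.Icc (-b k) (b k)
  set body := T.toLin' ⁻¹' box
  have hconv : Convex ℝ body := (convex_pi fun k _ => convex_Icc _ _).linear_preimage _
  have hsymm : ∀ y ∈ body, -y ∈ body := fun y hy k _ => by
    have := hy k trivial
    simp only [Set.mem_Icc, toLin'_apply, mulVec_neg, Pi.neg_apply] at this ⊢
    constructor <;> linarith [this.1, this.2]
  have hbox : volume box = ENNReal.ofReal (∏ k, 2 * b k) := by
    rw [volume_pi_pi, ENNReal.ofReal_prod_of_nonneg fun k _ => by linarith [hb k]]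
    simp only [Real.volume_Icc]
    congr! 2
    ring
  have hbody : volume body = ENNReal.ofReal (|T.det|⁻¹ * ∏ k, 2 * b k) := by
    rw [Measure.addHaar_preimage_linearMap _ (by rwa [LinearMap.det_toLin']), hbox,
      ← ENNReal.ofReal_mul (by positivity), LinearMap.det_toLin', abs_inv]
  have hfund := ZSpan.isAddFundamentalDomain' (Pi.basisFun ℝ ι) volume
  have hfundvol : volume (ZSpan.fundamentalDomain (Pi.basisFun ℝ ι)) = 1 := by
    simp [ZSpan.fundamentalDomain_pi_basisFun, volume_pi_pi]
  have : Countable (Submodule.span ℤ (Set.range (Pi.basisFun ℝ ι))).toAddSubgroup :=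
    inferInstanceAs (Countable (Submodule.span ℤ (Set.range (Pi.basisFun ℝ ι))))
  have hvol' : volume (ZSpan.fundamentalDomain (Pi.basisFun ℝ ι)) * 2 ^ Module.finrank ℝ (ι → ℝ)
      < volume body := by
    have hpos : 0 < |T.det|⁻¹ * ∏ k, 2 * b k :=
      mul_pos (inv_pos.2 (abs_pos.2 hT)) (Finset.prod_pos fun k _ => by linarith [hb k])
    rwa [hfundvol, one_mul, hbody, Module.finrank_fintype_fun_eq_card, ← ENNReal.ofReal_ofNat,
      ← ENNReal.ofReal_pow zero_le_two, ENNReal.ofReal_lt_ofReal_iff hpos,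
      lt_inv_mul_iff₀ (abs_pos.2 hT), mul_comm]
  obtain ⟨y, hy0, hy⟩ :=
    exists_ne_zero_mem_lattice_of_measure_mul_two_pow_lt_measure hfund hsymm hconv hvol'
  obtain ⟨x, hx⟩ := exists_intCast_eq_of_mem_span_basisFun y.2
  refine ⟨x, ?_, fun k => abs_le.2 ?_⟩
  · rintro rfl
    exact hy0 (Subtype.ext (by simp [← hx]))
  · have := hy k trivial
    rwa [← hx] at this

theorem abs_le_of_dotProduct_eq_zero {φ v : ι → ℝ} {k₀ : ι} (hmax : ∀ k, |φ k| ≤ |φ k₀|)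
    (hk₀ : φ k₀ ≠ 0) (h : φ ⬝ᵥ v = 0) {μ : ℝ} (hv : ∀ k ≠ k₀, |v k| ≤ μ) :
    |v k₀| ≤ (Fintype.card ι - 1 : ℕ) * μ := by
  have hsplit : φ k₀ * v k₀ = -∑ k ∈ Finset.univ.erase k₀, φ k * v k := by
    rw [dotProduct, ← Finset.add_sum_erase _ _ (Finset.mem_univ k₀)] at h
    linarith
  refine le_of_mul_le_mul_left ?_ (abs_pos.2 hk₀)
  calc |φ k₀| * |v k₀| = |∑ k ∈ Finset.univ.erase k₀, φ k * v k| := by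
        rw [← abs_mul, hsplit, abs_neg]
    _ ≤ ∑ k ∈ Finset.univ.erase k₀, |φ k₀| * μ := by
        refine (Finset.abs_sum_le_sum_abs _ _).trans (Finset.sum_le_sum fun k hk => ?_)
        rw [abs_mul]
        exact mul_le_mul (hmax k) (hv k (Finset.ne_of_mem_erase hk)) (abs_nonneg _)
          (abs_nonneg _)
    _ = |φ k₀| * ((Fintype.card ι - 1 : ℕ) * μ) := by
        rw [Finset.sum_const, Finset.card_erase_of_mem (Finset.mem_univ k₀), Finset.card_univ,
          nsmul_eq_mul]
        ring

theorem Matrix.exists_int_ne_zero_dotProduct_mulVec_eq_zero (M : Matrix ι ι ℝ)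
    (hM : |M.det| = 1) {φ : ι → ℝ} {ψ : ι → ℤ} (hφψ : φ ᵥ* M = Int.cast ∘ ψ) {k₀ : ι}
    (hk₀ : φ k₀ ≠ 0) {μ : ℝ} (hμ : 0 < μ) (hvol : 2 * |φ k₀| < μ ^ (Fintype.card ι - 1)) :
    ∃ x : ι → ℤ, x ≠ 0 ∧ φ ⬝ᵥ (M *ᵥ (Int.cast ∘ x)) = 0 ∧
      ∀ k ≠ k₀, |(M *ᵥ (Int.cast ∘ x)) k| ≤ μ := by
  have hT : |(M.updateRow k₀ (φ ᵥ* M)).det| = |φ k₀| := by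
    rw [vecMul_eq_sum, det_updateRow_sum, smul_eq_mul, abs_mul, hM, mul_one]
  set T := M.updateRow k₀ (φ ᵥ* M)
  set b : ι → ℝ := Function.update (fun _ => μ) k₀ (1 / 2)
  have hb : ∀ k, 0 < b k := fun k => by
    unfold b; rcases eq_or_ne k k₀ with rfl | hk <;> simp [*]
  set d := Fintype.card ι - 1
  have hprod : ∏ k, 2 * b k = (2 * μ) ^ d := by
    rw [← Finset.mul_prod_erase _ _ (Finset.mem_univ k₀),
      Finset.prod_congr rfl fun k hk => show 2 * b k = 2 * μ by
        simp [b, Finset.ne_of_mem_erase hk],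
      Finset.prod_const, Finset.card_erase_of_mem (Finset.mem_univ k₀), Finset.card_univ]
    simp [b, d]
  have hcard : d + 1 = Fintype.card ι := Nat.sub_add_cancel (Fintype.card_pos_iff.2 ⟨k₀⟩)
  obtain ⟨x, hx0, hx⟩ := T.exists_int_ne_zero_abs_mulVec_le
    (abs_pos.1 (hT ▸ abs_pos.2 hk₀)) b hb <| calc
      2 ^ Fintype.card ι * |T.det| = 2 ^ d * (2 * |φ k₀|) := by
        rw [hT, ← mul_assoc, ← pow_succ, hcard]
      _ < 2 ^ d * μ ^ d := by gcongr
      _ = ∏ k, 2 * b k := by rw [hprod, mul_pow]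
  have hdot : φ ⬝ᵥ (M *ᵥ (Int.cast ∘ x)) = ((ψ ⬝ᵥ x : ℤ) : ℝ) := by
    rw [dotProduct_mulVec, hφψ]
    simp [dotProduct]
  have hψx : ψ ⬝ᵥ x = 0 := by
    have h := hx k₀
    rw [show (T *ᵥ (Int.cast ∘ x)) k₀ = φ ⬝ᵥ (M *ᵥ (Int.cast ∘ x)) by
      simp [T, mulVec, dotProduct_mulVec], hdot] at h
    simp only [b, Function.update_self] at h
    exact Int.abs_lt_one_iff.1 (by exact_mod_cast h.trans_lt (by norm_num : (1 / 2 : ℝ) < 1))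
  refine ⟨x, hx0, by rw [hdot, hψx, Int.cast_zero], fun k hk => ?_⟩
  simpa [T, b, hk, mulVec, updateRow_ne hk] using hx k

theorem Matrix.exists_int_ne_zero_abs_mulVec_le_of_vecMul_eq_intCast (M : Matrix ι ι ℝ)
    (hM : |M.det| = 1) {φ : ι → ℝ} {ψ : ι → ℤ} (hφψ : φ ᵥ* M = Int.cast ∘ ψ) (hφ : φ ≠ 0)
    {ρ μ : ℝ} (hρ : ∀ k, |φ k| ≤ ρ) (hμ : 0 < μ) (hρμ : 2 * ρ < μ ^ (Fintype.card ι - 1)) :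
    ∃ x : ι → ℤ, x ≠ 0 ∧ ∀ k, |(M *ᵥ (Int.cast ∘ x)) k| ≤ (Fintype.card ι - 1 : ℕ) * μ := by
  obtain ⟨k₁, hk₁⟩ := Function.ne_iff.1 hφ
  have : Nonempty ι := ⟨k₁⟩
  obtain ⟨k₀, hmax⟩ := Finite.exists_max fun k => |φ k|
  have hk₀ : φ k₀ ≠ 0 := abs_pos.1 ((abs_pos.2 hk₁).trans_le (hmax k₁))
  obtain ⟨x, hx0, hdot, hx⟩ := M.exists_int_ne_zero_dotProduct_mulVec_eq_zero hM hφψ hk₀ hμ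
    (by linarith [hρ k₀])
  refine ⟨x, hx0, fun k => ?_⟩
  rcases eq_or_ne k k₀ with rfl | hk
  · exact abs_le_of_dotProduct_eq_zero hmax hk₀ hdot hx
  · have : (1 : ℝ) ≤ (Fintype.card ι - 1 : ℕ) := by
      have := Fintype.one_lt_card_iff.2 ⟨k, k₀, hk⟩
      exact_mod_cast (by omega : 1 ≤ Fintype.card ι - 1)
    exact (hx k hk).trans (le_mul_of_one_le_left hμ.le this)

end Minkowski

section Transpose

variable {ι κ : Type*} [Fintype ι] [Fintype κ] [DecidableEq ι] [DecidableEq κ]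

noncomputable def transferenceMatrix (A : Matrix ι κ ℝ) (α : ι → ℝ) (β : κ → ℝ) :
    Matrix (ι ⊕ κ) (ι ⊕ κ) ℝ :=
  fromBlocks (diagonal α⁻¹) 0 (-(diagonal β * Aᵀ)) (diagonal β)

variable (A : Matrix ι κ ℝ) (α : ι → ℝ) (β : κ → ℝ)

theorem det_transferenceMatrix :
    (transferenceMatrix A α β).det = (∏ i, α i)⁻¹ * ∏ j, β j := by
  simp [transferenceMatrix, det_fromBlocks_zero₁₂, Finset.prod_inv_distrib]

theorem transferenceMatrix_mulVec (u : ι → ℝ) (v : κ → ℝ) :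
    transferenceMatrix A α β *ᵥ Sum.elim u v = Sum.elim (α⁻¹ * u) (β * (v - Aᵀ *ᵥ u)) := by
  ext (i | j)
  · simp [transferenceMatrix, fromBlocks_mulVec, mulVec_diagonal]
  · simp only [transferenceMatrix, fromBlocks_mulVec, Sum.elim_comp_inl, Sum.elim_comp_inr,
      zero_mulVec, add_zero, neg_mulVec, ← mulVec_mulVec, Sum.elim_inr, Pi.add_apply, Pi.neg_apply,
      mulVec_diagonal, Pi.mul_apply, Pi.sub_apply]
    ring

theorem vecMul_transferenceMatrix (u : ι → ℝ) (v : κ → ℝ) :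
    Sum.elim u v ᵥ* transferenceMatrix A α β = Sum.elim (u * α⁻¹ - A *ᵥ (v * β)) (v * β) := by
  have hv : v ᵥ* diagonal β = v * β := funext (vecMul_diagonal v β)
  ext (i | j) <;> simp [transferenceMatrix, vecMul_fromBlocks, vecMul_diagonal, vecMul_neg,
    ← vecMul_vecMul, vecMul_transpose, sub_eq_add_neg, hv]

variable {A α β}

theorem exists_int_ne_zero_abs_transferenceMatrix_mulVec_le (hα : ∀ i, 0 < α i)
    (hβ : ∀ j, 0 < β j) (hαβ : ∏ i, α i = ∏ j, β j) {q : κ → ℤ} (hq0 : q ≠ 0) {p : ι → ℤ}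
    {ρ μ : ℝ} (hp : ∀ i, α i * |(A *ᵥ (Int.cast ∘ q)) i - p i| ≤ ρ)
    (hq : ∀ j, |(q j : ℝ)| ≤ ρ * β j) (hμ : 0 < μ)
    (hρμ : 2 * ρ < μ ^ (Fintype.card (ι ⊕ κ) - 1)) :
    ∃ x : ι ⊕ κ → ℤ, x ≠ 0 ∧ ∀ k,
      |(transferenceMatrix A α β *ᵥ (Int.cast ∘ x)) k| ≤ (Fintype.card (ι ⊕ κ) - 1 : ℕ) * μ := by
  set φ : ι ⊕ κ → ℝ := Sum.elim (α * (A *ᵥ (Int.cast ∘ q) - Int.cast ∘ p)) (β⁻¹ * Int.cast ∘ q)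
  have hM : |(transferenceMatrix A α β).det| = 1 := by
    rw [det_transferenceMatrix, hαβ,
      inv_mul_cancel₀ (Finset.prod_ne_zero_iff.2 fun j _ => (hβ j).ne'), abs_one]
  have hφψ : φ ᵥ* transferenceMatrix A α β = Int.cast ∘ Sum.elim (-p) q := by
    have hqβ : β⁻¹ * Int.cast ∘ q * β = Int.cast ∘ q := funext fun j => by
      simp only [Pi.mul_apply, Pi.inv_apply, mul_right_comm _ _ (β j),
        inv_mul_cancel₀ (hβ j).ne', one_mul]
    ext (i | j)
    · simp only [vecMul_transferenceMatrix, hqβ, Sum.elim_inl, Pi.sub_apply, Pi.mul_apply,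
        Function.comp_apply, Pi.inv_apply, Pi.neg_apply, Int.cast_neg, φ]
      field_simp [(hα i).ne']
      ring
    · simp [vecMul_transferenceMatrix, hqβ, φ]
  have hφ : φ ≠ 0 := by
    obtain ⟨j, hj⟩ := Function.ne_iff.1 hq0
    exact Function.ne_iff.2 ⟨Sum.inr j, by simpa [φ, (hβ j).ne'] using hj⟩
  have hρ : ∀ k, |φ k| ≤ ρ := by
    rintro (i | j)
    · simpa [φ, abs_mul, abs_of_pos (hα i)] using hp i
    · simpa [φ, abs_mul, abs_of_pos (hβ j), inv_mul_le_iff₀ (hβ j)] using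
        (hq j).trans_eq (mul_comm _ _)
  exact (transferenceMatrix A α β).exists_int_ne_zero_abs_mulVec_le_of_vecMul_eq_intCast
    hM hφψ hφ hρ hμ hρμ

theorem exists_int_approx_transpose (hα : ∀ i, 0 < α i) (hβ : ∀ j, 1 ≤ β j)
    (hαβ : ∏ i, α i = ∏ j, β j) {q : κ → ℤ} (hq0 : q ≠ 0) {p : ι → ℤ} {ρ μ c : ℝ}
    (hp : ∀ i, α i * |(A *ᵥ (Int.cast ∘ q)) i - p i| ≤ ρ) (hq : ∀ j, |(q j : ℝ)| ≤ ρ * β j)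
    (hμ : 0 < μ) (hρμ : 2 * ρ < μ ^ (Fintype.card (ι ⊕ κ) - 1))
    (hc : (Fintype.card (ι ⊕ κ) - 1 : ℕ) * μ ≤ c) (hc1 : c < 1) :
    ∃ p' : ι → ℤ, p' ≠ 0 ∧ ∃ q' : κ → ℤ, (∀ i, |(p' i : ℝ)| ≤ c * α i) ∧
      ∀ j, β j * |(Aᵀ *ᵥ (Int.cast ∘ p')) j - q' j| ≤ c := by
  have hβ0 (j : κ) : 0 < β j := one_pos.trans_le (hβ j)
  obtain ⟨x, hx0, hx⟩ := exists_int_ne_zero_abs_transferenceMatrix_mulVec_le hα hβ0 hαβ hq0 hp hq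
    hμ hρμ
  set p' := x ∘ Sum.inl
  set q' := x ∘ Sum.inr
  have hMx := transferenceMatrix_mulVec A α β (Int.cast ∘ p') (Int.cast ∘ q')
  rw [← Sum.comp_elim, Sum.elim_comp_inl_inr] at hMx
  have hp' (i : ι) : |(p' i : ℝ)| ≤ c * α i := by
    have := (hx (Sum.inl i)).trans hc
    rwa [hMx, Sum.elim_inl, Pi.mul_apply, abs_mul, Pi.inv_apply, abs_inv, abs_of_pos (hα i),
      inv_mul_le_iff₀ (hα i), mul_comm] at this
  have hq' (j : κ) : β j * |(Aᵀ *ᵥ (Int.cast ∘ p')) j - q' j| ≤ c := by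
    have := (hx (Sum.inr j)).trans hc
    rwa [hMx, Sum.elim_inr, Pi.mul_apply, abs_mul, abs_of_pos (hβ0 j), Pi.sub_apply,
      abs_sub_comm] at this
  refine ⟨p', fun hp'0 => hx0 ?_, q', hp', hq'⟩
  have hq'0 : q' = 0 := funext fun j => by
    have hj := hq' j
    simp only [hp'0, Pi.comp_zero, Int.cast_zero, Function.const_zero, mulVec_zero,
      Pi.zero_apply, zero_sub, abs_neg] at hj
    have : |(q' j : ℝ)| < 1 := by nlinarith [hβ j, abs_nonneg (q' j : ℝ)]
    exact Int.abs_lt_one_iff.1 (by exact_mod_cast this)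
  rw [← Sum.elim_comp_inl_inr x]
  exact (congrArg₂ Sum.elim hp'0 hq'0).trans Sum.elim_zero_zero

end Transpose

section Quasinorm

variable {k : ℕ} (hk : 0 < k) {w : Fin k → ℝ}

theorem qnorm_nonneg (x : Fin k → ℝ) : 0 ≤ qnorm hk w x := by
  obtain ⟨i⟩ := Fin.pos_iff_nonempty.mp hk
  exact (Real.rpow_nonneg (abs_nonneg (x i)) _).trans
    (Finset.le_sup' (fun i => |x i| ^ (w i)⁻¹) (Finset.mem_univ i))

variable {x : Fin k → ℝ} {c : ℝ}

theorem qnorm_le_iff (hw : ∀ i, 0 < w i) (hc : 0 ≤ c) :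
    qnorm hk w x ≤ c ↔ ∀ i, |x i| ≤ c ^ w i := by
  simp only [qnorm, Finset.sup'_le_iff, Finset.mem_univ, true_implies,
    Real.rpow_inv_le_iff_of_pos (abs_nonneg _) hc (hw _)]

theorem qnorm_lt_iff (hw : ∀ i, 0 < w i) (hc : 0 ≤ c) :
    qnorm hk w x < c ↔ ∀ i, |x i| < c ^ w i := by
  simp only [qnorm, Finset.sup'_lt_iff, Finset.mem_univ, true_implies,
    Real.rpow_inv_lt_iff_of_pos (abs_nonneg _) hc (hw _)]

theorem qnorm_pos_iff (hw : ∀ i, 0 < w i) : 0 < qnorm hk w x ↔ x ≠ 0 := by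
  rw [← not_le, qnorm_le_iff hk hw le_rfl, not_iff_not, funext_iff]
  simp [Real.zero_rpow (hw _).ne']

theorem qnorm_intCast_pos_iff (hw : ∀ i, 0 < w i) {q : Fin k → ℤ} :
    0 < qnorm hk w (fun i => (q i : ℝ)) ↔ q ≠ 0 := by
  simp [qnorm_pos_iff hk hw, funext_iff]

theorem idist_lt_iff :
    idist hk w x < c ↔ ∃ p : Fin k → ℤ, qnorm hk w (fun i => x i - p i) < c :=
  ⟨exists_lt_of_ciInf_lt, fun ⟨p, hp⟩ =>
    (ciInf_le ⟨0, Set.forall_mem_range.2 fun _ => qnorm_nonneg hk _⟩ p).trans_lt hp⟩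

end Quasinorm

def HasDensityOne (P : ℕ → Prop) : Prop :=
  Tendsto (fun N : ℕ => ({l : ℕ | 1 ≤ l ∧ l ≤ N ∧ P l}.ncard : ℝ) / N) atTop (𝓝 1)

section Density

theorem ncard_levels_le (P : ℕ → Prop) (N : ℕ) : {l : ℕ | 1 ≤ l ∧ l ≤ N ∧ P l}.ncard ≤ N := by
  calc {l : ℕ | 1 ≤ l ∧ l ≤ N ∧ P l}.ncard ≤ (Set.Icc 1 N).ncard :=
        Set.ncard_le_ncard (fun l hl => ⟨hl.1, hl.2.1⟩) (Set.finite_Icc 1 N)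
    _ = N := by simp [Set.ncard_eq_toFinset_card']

variable {P Q : ℕ → Prop}

theorem ncard_levels_le_of_shift {K : ℕ} (h : ∀ l, P l → Q (l + K)) (N : ℕ) :
    {l : ℕ | 1 ≤ l ∧ l ≤ N ∧ P l}.ncard ≤ {l : ℕ | 1 ≤ l ∧ l ≤ N ∧ Q l}.ncard + K := by
  have hfin : {l : ℕ | 1 ≤ l ∧ l ≤ N - K ∧ P l}.Finite :=
    (Set.finite_Icc 1 (N - K)).subset fun l hl => ⟨hl.1, hl.2.1⟩
  calc {l : ℕ | 1 ≤ l ∧ l ≤ N ∧ P l}.ncard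
      ≤ ({l : ℕ | 1 ≤ l ∧ l ≤ N - K ∧ P l} ∪ Set.Ioc (N - K) N).ncard :=
        Set.ncard_le_ncard (fun l ⟨hl1, hlN, hl⟩ => by
          by_cases hlK : l ≤ N - K
          · exact Or.inl ⟨hl1, hlK, hl⟩
          · exact Or.inr ⟨not_le.1 hlK, hlN⟩) (hfin.union (Set.finite_Ioc _ _))
    _ ≤ {l : ℕ | 1 ≤ l ∧ l ≤ N - K ∧ P l}.ncard + (Set.Ioc (N - K) N).ncard :=
        Set.ncard_union_le _ _
    _ = ((· + K) '' {l : ℕ | 1 ≤ l ∧ l ≤ N - K ∧ P l}).ncard + (N - (N - K)) := by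
        rw [Set.ncard_image_of_injective _ (add_left_injective K)]
        simp [Set.ncard_eq_toFinset_card']
    _ ≤ {l : ℕ | 1 ≤ l ∧ l ≤ N ∧ Q l}.ncard + K := by
        gcongr ?_ + ?_
        · refine Set.ncard_le_ncard ?_ ((Set.finite_Icc 1 N).subset fun l hl => ⟨hl.1, hl.2.1⟩)
          rintro _ ⟨l, ⟨hl1, hlN, hl⟩, rfl⟩
          exact ⟨by dsimp only; omega, by dsimp only; omega, h l hl⟩
        · omega

theorem HasDensityOne.of_shift (hP : HasDensityOne P) (K : ℕ) (h : ∀ l, P l → Q (l + K)) :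
    HasDensityOne Q := by
  have hlow := hP.sub (tendsto_const_div_atTop_nhds_zero_nat (K : ℝ))
  rw [sub_zero] at hlow
  refine tendsto_of_tendsto_of_tendsto_of_le_of_le' hlow tendsto_const_nhds ?_ ?_
  · filter_upwards [eventually_gt_atTop 0] with N hN
    rw [← sub_div]
    gcongr
    rw [sub_le_iff_le_add]
    exact_mod_cast ncard_levels_le_of_shift h N
  · filter_upwards [eventually_gt_atTop 0] with N hN
    rw [div_le_one (by exact_mod_cast hN)]
    exact_mod_cast ncard_levels_le Q N

end Density

theorem tendsto_two_rpow_neg_rpow {w : ℝ} (hw : 0 < w) :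
    Tendsto (fun K : ℕ => ((2 : ℝ) ^ (-(K : ℝ))) ^ w) atTop (𝓝 0) := by
  have h2 : Tendsto (fun K : ℕ => (2 : ℝ) ^ (-(K : ℝ))) atTop (𝓝 0) := by
    simpa [Real.rpow_neg, Real.rpow_natCast, inv_pow] using
      tendsto_pow_atTop_nhds_zero_of_lt_one (r := (2 : ℝ)⁻¹) (by norm_num) (by norm_num)
  have := (Real.continuousAt_rpow_const 0 w (Or.inr hw.le)).tendsto.comp h2
  rwa [Real.zero_rpow hw.ne'] at this

def IsApproxLevel {m n : ℕ} (hm : 0 < m) (hn : 0 < n) (r : Fin m → ℝ) (s : Fin n → ℝ)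
    (A : Matrix (Fin m) (Fin n) ℝ) (ε : ℝ) (l : ℕ) : Prop :=
  ∃ q : Fin n → ℤ,
    idist hm r (fun i => ∑ j, A i j * (q j : ℝ)) < ε * 2 ^ (-(l : ℝ)) ∧
    0 < qnorm hn s (fun j => (q j : ℝ)) ∧
    qnorm hn s (fun j => (q j : ℝ)) < 2 ^ (l : ℝ)

section ApproxLevel

variable {m n : ℕ} {hm : 0 < m} {hn : 0 < n} {r : Fin m → ℝ} {s : Fin n → ℝ}
  {A : Matrix (Fin m) (Fin n) ℝ}

theorem singularOnAverage_iff :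
    SingularOnAverage hm hn r s A ↔ ∀ ε > 0, HasDensityOne (IsApproxLevel hm hn r s A ε) :=
  Iff.rfl

theorem IsApproxLevel.exists_int (hr : ∀ i, 0 < r i) (hs : ∀ j, 0 < s j) {ε : ℝ} {l : ℕ}
    (h : IsApproxLevel hm hn r s A ε l) :
    ∃ q : Fin n → ℤ, q ≠ 0 ∧ ∃ p : Fin m → ℤ,
      (∀ i, |(A *ᵥ (Int.cast ∘ q)) i - p i| < (ε * 2 ^ (-(l : ℝ))) ^ r i) ∧
      ∀ j, |(q j : ℝ)| < (2 ^ (l : ℝ)) ^ s j := by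
  obtain ⟨q, hdist, hpos, hlt⟩ := h
  obtain ⟨p, hp⟩ := (idist_lt_iff hm).1 hdist
  exact ⟨q, (qnorm_intCast_pos_iff hn hs).1 hpos, p,
    (qnorm_lt_iff hm hr ((qnorm_nonneg hm _).trans hp.le)).1 hp,
    (qnorm_lt_iff hn hs (by positivity)).1 hlt⟩

theorem isApproxLevel_of_abs_le (hr : ∀ i, 0 < r i) (hr1 : ∀ i, r i ≤ 1) (hs : ∀ j, 0 < s j)
    {c ε : ℝ} (hc0 : 0 ≤ c) (hc1 : c < 1) (hcε : c < ε) (l : ℕ) {q : Fin n → ℤ} (hq0 : q ≠ 0)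
    {p : Fin m → ℤ}
    (hp : ∀ i, (2 ^ (l : ℝ)) ^ r i * |(A *ᵥ (Int.cast ∘ q)) i - p i| ≤ c)
    (hq : ∀ j, |(q j : ℝ)| ≤ c * (2 ^ (l : ℝ)) ^ s j) :
    IsApproxLevel hm hn r s A ε l := by
  have hε : 0 < ε := hc0.trans_lt hcε
  refine ⟨q, (idist_lt_iff hm).2 ⟨p, (qnorm_lt_iff hm hr (by positivity)).2 fun i => ?_⟩,
    (qnorm_intCast_pos_iff hn hs).2 hq0,
    (qnorm_lt_iff hn hs (by positivity)).2 fun j => ?_⟩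
  · have h2 : 0 < ((2 : ℝ) ^ (l : ℝ)) ^ r i := by positivity
    calc |(A *ᵥ (Int.cast ∘ q)) i - p i| ≤ c * (2 ^ (-(l : ℝ))) ^ r i := by
          rw [Real.rpow_neg zero_le_two, Real.inv_rpow (by positivity), ← div_eq_mul_inv,
            le_div_iff₀ h2, mul_comm]
          exact hp i
      _ ≤ c ^ r i * (2 ^ (-(l : ℝ))) ^ r i := by
          gcongr
          exact Real.self_le_rpow_of_le_one hc0 hc1.le (hr1 i)
      _ < (ε * 2 ^ (-(l : ℝ))) ^ r i := by
          rw [← Real.mul_rpow hc0 (by positivity)]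
          gcongr
          exact hr i
  · exact (hq j).trans_lt (mul_lt_of_lt_one_left (by positivity) hc1)

theorem IsApproxLevel.transpose_add (hr : ∀ i, 0 < r i) (hs : ∀ j, 0 < s j)
    (hrsum : ∑ i, r i = 1) (hssum : ∑ j, s j = 1) {K : ℕ} {ρ μ c ε' : ℝ}
    (hKr : ∀ i, ((2 : ℝ) ^ (-(K : ℝ))) ^ r i ≤ ρ) (hKs : ∀ j, ((2 : ℝ) ^ (-(K : ℝ))) ^ s j ≤ ρ)
    (hμ : 0 < μ) (hρμ : 2 * ρ < μ ^ (m + n - 1)) (hc : (m + n - 1 : ℕ) * μ ≤ c) (hc1 : c < 1)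
    (hcε : c < ε') {l : ℕ} (h : IsApproxLevel hm hn r s A (2 ^ (-(2 * K : ℝ))) l) :
    IsApproxLevel hn hm s r Aᵀ ε' (l + K) := by
  obtain ⟨q, hq0, p, hp, hq⟩ := h.exists_int hr hs
  set t := l + K
  have hprod {k : ℕ} (w : Fin k → ℝ) (hw : ∑ i, w i = 1) :
      ∏ i, ((2 : ℝ) ^ (t : ℝ)) ^ w i = 2 ^ (t : ℝ) := by
    rw [← Real.rpow_sum_of_pos (by positivity), hw, Real.rpow_one]
  have ht₁ : (2 : ℝ) ^ (t : ℝ) * (2 ^ (-(2 * K : ℝ)) * 2 ^ (-(l : ℝ))) = 2 ^ (-(K : ℝ)) := by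
    simp only [t, Nat.cast_add, ← Real.rpow_add two_pos]
    ring_nf
  have ht₂ : (2 : ℝ) ^ (-(K : ℝ)) * 2 ^ (t : ℝ) = 2 ^ (l : ℝ) := by
    simp only [t, Nat.cast_add, ← Real.rpow_add two_pos]
    ring_nf
  have hp' (i : Fin m) : ((2 : ℝ) ^ (t : ℝ)) ^ r i * |(A *ᵥ (Int.cast ∘ q)) i - p i| ≤ ρ := by
    refine (mul_le_mul_of_nonneg_left (hp i).le (by positivity)).trans ?_
    rw [← Real.mul_rpow (by positivity) (by positivity), ht₁]
    exact hKr i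
  have hq' (j : Fin n) : |(q j : ℝ)| ≤ ρ * ((2 : ℝ) ^ (t : ℝ)) ^ s j := by
    refine (hq j).le.trans ?_
    rw [← ht₂, Real.mul_rpow (by positivity) (by positivity)]
    gcongr
    exact hKs j
  have hcard : Fintype.card (Fin m ⊕ Fin n) = m + n := by simp
  have hβ (j : Fin n) : 1 ≤ ((2 : ℝ) ^ (t : ℝ)) ^ s j :=
    Real.one_le_rpow (Real.one_le_rpow one_le_two (by positivity)) (hs j).le
  obtain ⟨p', hp'0, q', hp'', hq''⟩ := exists_int_approx_transpose (A := A)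
    (fun i => by positivity) hβ (by rw [hprod r hrsum, hprod s hssum]) hq0 hp' hq' hμ
    (hcard ▸ hρμ) (hcard ▸ hc) hc1
  have hs1 (j : Fin n) : s j ≤ 1 :=
    hssum ▸ Finset.single_le_sum (fun j _ => (hs j).le) (Finset.mem_univ j)
  exact isApproxLevel_of_abs_le hs hs1 hr (le_trans (by positivity) hc) hc1 hcε t hp'0 hq'' hp''

theorem exists_isApproxLevel_transpose_add (hr : ∀ i, 0 < r i) (hs : ∀ j, 0 < s j)
    (hrsum : ∑ i, r i = 1) (hssum : ∑ j, s j = 1) {ε' : ℝ} (hε' : 0 < ε') :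
    ∃ ε > 0, ∃ K : ℕ,
      ∀ l, IsApproxLevel hm hn r s A ε l → IsApproxLevel hn hm s r Aᵀ ε' (l + K) := by
  set c := min ε' 1 / 2
  have hc : 0 < c := by positivity
  set μ := c / (m + n)
  have hμ : 0 < μ := by positivity
  set ρ := μ ^ (m + n - 1) / 4
  have hρ : 0 < ρ := by positivity
  have hsmall {k : ℕ} {w : Fin k → ℝ} (hw : ∀ i, 0 < w i) :
      ∀ᶠ K : ℕ in atTop, ∀ i, ((2 : ℝ) ^ (-(K : ℝ))) ^ w i ≤ ρ :=
    eventually_all.2 fun i => (tendsto_two_rpow_neg_rpow (hw i)).eventually (ge_mem_nhds hρ)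
  obtain ⟨K, hKr, hKs⟩ := ((hsmall hr).and (hsmall hs)).exists
  have hρμ : 2 * ρ < μ ^ (m + n - 1) := by
    simp only [ρ]; linarith [pow_pos hμ (m + n - 1)]
  have hc1 : c < 1 := by simp only [c]; linarith [min_le_right ε' 1]
  have hcε : c < ε' := by simp only [c]; linarith [min_le_left ε' 1]
  refine ⟨_, by positivity, K, fun l h =>
    h.transpose_add hr hs hrsum hssum hKr hKs hμ hρμ ?_ hc1 hcε⟩
  rw [Nat.cast_sub (by omega), Nat.cast_add, Nat.cast_one]
  calc ((m : ℝ) + n - 1) * μ ≤ (m + n) * μ := by gcongr; linarith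
    _ = c := by simp only [μ]; field_simp

theorem SingularOnAverage.transpose (hr : ∀ i, 0 < r i) (hs : ∀ j, 0 < s j)
    (hrsum : ∑ i, r i = 1) (hssum : ∑ j, s j = 1) (h : SingularOnAverage hm hn r s A) :
    SingularOnAverage hn hm s r Aᵀ := by
  rw [singularOnAverage_iff] at h ⊢
  intro ε' hε'
  obtain ⟨ε, hε, K, hK⟩ := exists_isApproxLevel_transpose_add hr hs hrsum hssum hε'
  exact (h ε hε).of_shift K hK

end ApproxLevel

theorem singularOnAverage_transpose_iff_general {m n : ℕ} (hm : 0 < m) (hn : 0 < n)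
    (r : Fin m → ℝ) (s : Fin n → ℝ)
    (hrpos : ∀ i, 0 < r i) (hspos : ∀ j, 0 < s j)
    (hrsum : ∑ i, r i = 1) (hssum : ∑ j, s j = 1)
    (A : Matrix (Fin m) (Fin n) ℝ) :
    SingularOnAverage hm hn r s A ↔ SingularOnAverage hn hm s r A.transpose :=
  ⟨SingularOnAverage.transpose hrpos hspos hrsum hssum, fun h => by
    simpa using h.transpose hspos hrpos hssum hrsum⟩

/-- `A` is singular on average iff `A^T` is singular on average. -/
theorem singularOnAverage_transpose_iff {m n : ℕ} (hm : 0 < m) (hn : 0 < n)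
    (r : Fin m → ℝ) (s : Fin n → ℝ)
    (hrpos : ∀ i, 0 < r i) (hspos : ∀ j, 0 < s j)
    (hrmono : ∀ i i' : Fin m, i ≤ i' → r i' ≤ r i)
    (hsmono : ∀ j j' : Fin n, j ≤ j' → s j' ≤ s j)
    (hrsum : ∑ i, r i = 1) (hssum : ∑ j, s j = 1)
    (A : Matrix (Fin m) (Fin n) ℝ) :
    SingularOnAverage hm hn r s A ↔ SingularOnAverage hn hm s r A.transpose :=
  singularOnAverage_transpose_iff_general hm hn r s hrpos hspos hrsum hssum A
end

section
/- Let S > R > 1, and let (Y_i), (M_i) be sequences with Y_i increasing, M_i decreasing, M_i Y_{i+1} ≤ 1 for all i, Y_{i+V} ≥ 2 Y_i for some fixed V ∈ ℕ, and suppose lim_{k→∞} (1/log Y_k)|{i ≤ k : M_i Y_{i+1} > R/S^3}| = 0. Then there exists an increasing function φ: ℤ_{≥1} → ℤ_{≥1} such that for every i ≥ 1: Y_{φ(i+1)} ≥ R Y_{φ(i)} and M_{φ(i)} Y_{φ(i+1)} ≤ R, and moreover limsup_{k→∞} k/log Y_{φ(k)} ≤ 1/log S. -/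
/-!
Every index `v ≥ 1` gets a parent `step v < v`: the largest `l` with `T Y_l ≤ Y_v` (here
`T = S³`) if that `l` is good, i.e. `M_l Y_{l+1} ≤ R/T`, and otherwise the largest `l` with
`R Y_l ≤ Y_v`. Either way `R Y_l ≤ Y_v` and `M_l Y_v ≤ R`. As `Y_v → ∞`, every index has only
finitely many children, so Kőnig's lemma gives an infinite chain `φ` with `step (φ (i+1)) = φ i`.
An edge of the chain that does not multiply `Y` by `T` is charged to the bad index (or to `0`)
where the long jump would have landed; since `Y` grows by a factor `R` along every edge, at most
`K` edges (where `T ≤ R^K`) are charged to the same index. Hence all but `O(1 + #bad(φ k))`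
of the first `k` edges add `log T` to `log Y_{φ k}`, and the density hypothesis makes that error
`o(log Y_{φ k})`.
-/

open Filter Topology Finset

section ParentPath

variable {α : Type*} (σ : α → α)

theorem setOf_iterate_eq_subset (u : α) :
    {v | ∃ n, σ^[n] v = u} ⊆
      insert u (⋃ c ∈ {c | σ c = u ∧ c ≠ u}, {v | ∃ n, σ^[n] v = c}) := by
  rintro v ⟨n, hn⟩
  induction n with
  | zero => exact Or.inl hn
  | succ n ih =>
    rw [Function.iterate_succ_apply'] at hn
    by_cases h : σ^[n] v = u
    · exact ih h
    · exact Or.inr (Set.mem_biUnion ⟨hn, h⟩ ⟨n, rfl⟩)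

theorem exists_child_infinite {u : α} (hfin : {c | σ c = u ∧ c ≠ u}.Finite)
    (hu : {v | ∃ n, σ^[n] v = u}.Infinite) :
    ∃ c, σ c = u ∧ c ≠ u ∧ {v | ∃ n, σ^[n] v = c}.Infinite := by
  by_contra! h
  exact hu (((hfin.biUnion fun c hc => h c hc.1 hc.2).insert u).subset
    (setOf_iterate_eq_subset σ u))

/-- Kőnig's lemma for a tree given by its parent map `σ`. -/
theorem exists_seq_parent_eq (hfin : ∀ u, {c | σ c = u ∧ c ≠ u}.Finite) {r : α}
    (hr : {v | ∃ n, σ^[n] v = r}.Infinite) :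
    ∃ ψ : ℕ → α, ψ 0 = r ∧ ∀ n, σ (ψ (n + 1)) = ψ n ∧ ψ (n + 1) ≠ ψ n := by
  let P := {u : α // {v | ∃ n, σ^[n] v = u}.Infinite}
  choose next hnext using fun u : P =>
    let ⟨c, hc, hne, hinf⟩ := exists_child_infinite σ (hfin u) u.2
    (⟨⟨c, hinf⟩, hc, hne⟩ : ∃ c : P, σ c = u ∧ (c : α) ≠ u)
  refine ⟨fun n => (next^[n] ⟨r, hr⟩).1, rfl, fun n => ?_⟩
  simp only [Function.iterate_succ_apply']
  exact hnext _

end ParentPath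

theorem exists_iterate_eq_zero_of_lt {σ : ℕ → ℕ} (hσ : ∀ v, 0 < v → σ v < v) (v : ℕ) :
    ∃ n, σ^[n] v = 0 := by
  induction v using Nat.strong_induction_on with
  | _ v ih =>
    rcases Nat.eq_zero_or_pos v with rfl | hv
    · exact ⟨0, rfl⟩
    · obtain ⟨n, hn⟩ := ih _ (hσ v hv)
      exact ⟨n + 1, by rwa [Function.iterate_succ_apply]⟩

theorem exists_strictMono_parent_eq {σ : ℕ → ℕ} (h0 : σ 0 = 0) (hσ : ∀ v, 0 < v → σ v < v)
    (hfin : ∀ u, {c | σ c = u ∧ c ≠ u}.Finite) :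
    ∃ ψ : ℕ → ℕ, StrictMono ψ ∧ ψ 0 = 0 ∧ ∀ n, σ (ψ (n + 1)) = ψ n := by
  have hr : {v | ∃ n, σ^[n] v = 0}.Infinite := by
    rw [Set.eq_univ_of_forall (s := {v | ∃ n, σ^[n] v = 0}) (exists_iterate_eq_zero_of_lt hσ)]
    exact Set.infinite_univ
  obtain ⟨ψ, hψ0, hψ⟩ := exists_seq_parent_eq σ hfin hr
  refine ⟨ψ, strictMono_nat_of_lt_succ fun n => ?_, hψ0, fun n => (hψ n).1⟩
  obtain ⟨hpar, hne⟩ := hψ n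
  rcases Nat.eq_zero_or_pos (ψ (n + 1)) with h | h
  · rw [h, h0] at hpar
    exact absurd (h.trans hpar) hne
  · rw [← hpar]
    exact hσ _ h

theorem card_le_of_forall_lt_mul {z : ℕ → ℝ} {R T : ℝ} {K : ℕ} (hR : 1 < R)
    (hz0 : ∀ i, 0 < z i) (hz : ∀ i, R * z i ≤ z (i + 1)) (hK : T ≤ R ^ K) {F : Finset ℕ}
    (hF : ∀ i ∈ F, ∀ j ∈ F, z j < T * z i) : #F ≤ K := by
  rcases F.eq_empty_or_nonempty with rfl | hne
  · simp
  set i₀ := F.min' hne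
  have hsub : F ⊆ Ico i₀ (i₀ + K) := by
    intro j hj
    have hij : i₀ ≤ j := F.min'_le j hj
    have hgrow : R ^ (j - i₀) * z i₀ ≤ z j := by
      simpa [Nat.add_sub_cancel' hij] using
        geom_le (u := fun m => z (i₀ + m)) (by linarith) (j - i₀) fun m _ => hz (i₀ + m)
    have hpow : R ^ (j - i₀) < R ^ K := by
      have := hF i₀ (F.min'_mem hne) j hj
      nlinarith [hz0 i₀]
    have := (pow_lt_pow_iff_right₀ hR).1 hpow
    rw [mem_Ico]
    omega
  simpa using card_le_card hsub

theorem pow_card_filter_mul_le {z : ℕ → ℝ} {T : ℝ} (hT : 0 ≤ T) (hz : Monotone z) (k : ℕ) :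
    T ^ #{i ∈ range k | T * z i ≤ z (i + 1)} * z 0 ≤ z k := by
  induction k with
  | zero => simp
  | succ k ih =>
    rw [range_add_one, filter_insert]
    split_ifs with h
    · rw [card_insert_of_notMem (by simp), pow_succ', mul_assoc]
      exact (mul_le_mul_of_nonneg_left ih hT).trans h
    · exact ih.trans (hz k.le_succ)

theorem limsup_div_le_of_mul_le {ι : Type*} {l : Filter ι} [l.NeBot] {f a b : ι → ℝ}
    {c C D : ℝ} (hc : 0 < c) (ha : Tendsto a l atTop)
    (hb : Tendsto (fun k => b k / a k) l (𝓝 0)) (hf0 : ∀ k, 0 ≤ f k)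
    (hf : ∀ k, c * f k ≤ a k + C + D * b k) :
    limsup (fun k => f k / a k) l ≤ 1 / c := by
  have hg : Tendsto (fun k => (1 + C / a k + D * (b k / a k)) / c) l (𝓝 (1 / c)) := by
    simpa using (((tendsto_const_nhds (x := (1 : ℝ))).add
      ((tendsto_const_nhds (x := C)).div_atTop ha)).add
      (hb.const_mul D)).div_const c
  have hapos := ha.eventually_gt_atTop 0
  calc limsup (fun k => f k / a k) l
      ≤ limsup (fun k => (1 + C / a k + D * (b k / a k)) / c) l := by
        refine limsup_le_limsup ?_ ?_ hg.isBoundedUnder_le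
        · filter_upwards [hapos] with k hk
          rw [le_div_iff₀ hc, div_mul_eq_mul_div, div_le_iff₀ hk]
          have := hf k
          field_simp
          linarith
        · refine isCoboundedUnder_le_of_eventually_le l (x := 0) ?_
          filter_upwards [hapos] with k hk
          exact div_nonneg (hf0 k) hk.le
    _ = 1 / c := hg.limsup_eq

theorem tendsto_atTop_of_two_mul_le {Y : ℕ → ℝ} {V : ℕ} (h0 : 0 < Y 0) (hY : Monotone Y)
    (hdouble : ∀ i, 2 * Y i ≤ Y (i + V)) : Tendsto Y atTop atTop := by
  have hgeom (m : ℕ) : 2 ^ m * Y 0 ≤ Y (V * m) :=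
    geom_le (u := fun m => Y (V * m)) zero_le_two m fun m _ => by
      simpa only [Nat.mul_succ] using hdouble (V * m)
  refine tendsto_atTop_atTop_of_monotone hY fun C => ?_
  obtain ⟨m, hm⟩ := pow_unbounded_of_one_lt (C / Y 0) one_lt_two
  rw [div_lt_iff₀ h0] at hm
  exact ⟨V * m, by linarith [hgeom m]⟩

namespace BugeaudLaurent

variable {R T : ℝ} {Y M : ℕ → ℝ}

-- The value `0` also stands for "no `l ∈ [1, v]` qualifies".
noncomputable def backIndex (Y : ℕ → ℝ) (c : ℝ) (v : ℕ) : ℕ :=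
  Nat.findGreatest (fun l => 1 ≤ l ∧ c * Y l ≤ Y v) v

theorem mul_le_of_backIndex_ne_zero {c : ℝ} {v : ℕ} (h : backIndex Y c v ≠ 0) :
    c * Y (backIndex Y c v) ≤ Y v :=
  (Nat.findGreatest_of_ne_zero rfl h).2

theorem backIndex_lt {c : ℝ} (hc : 1 < c) (hYpos : ∀ k, 0 < Y k) {v : ℕ} (hv : 0 < v) :
    backIndex Y c v < v := by
  have hle : backIndex Y c v ≤ v := Nat.findGreatest_le v
  refine hle.lt_of_ne fun h => ?_
  have := mul_le_of_backIndex_ne_zero (c := c) (Y := Y) (v := v) (by rw [h]; exact hv.ne')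
  rw [h] at this
  nlinarith [hYpos v]

theorem lt_mul_backIndex_succ {c : ℝ} (hc : 1 ≤ c) (hYpos : ∀ k, 0 < Y k) (hY : StrictMono Y)
    (v : ℕ) : Y v < c * Y (backIndex Y c v + 1) := by
  by_cases hle : backIndex Y c v + 1 ≤ v
  · have := Nat.findGreatest_is_greatest (Nat.lt_succ_self _) hle
    push Not at this
    exact this (Nat.le_add_left 1 _)
  · calc Y v < Y (backIndex Y c v + 1) := hY (by omega)
      _ ≤ c * Y (backIndex Y c v + 1) := le_mul_of_one_le_left (hYpos _).le hc

noncomputable def badIndices (R T : ℝ) (Y M : ℕ → ℝ) (n : ℕ) : Finset ℕ :=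
  {i ∈ Icc 1 n | R / T < M i * Y (i + 1)}

theorem ncard_setOf_eq_card_badIndices (n : ℕ) :
    {i : ℕ | 1 ≤ i ∧ i ≤ n ∧ R / T < M i * Y (i + 1)}.ncard = #(badIndices R T Y M n) := by
  rw [← Set.ncard_coe_finset]
  congr 1
  ext i
  simp [badIndices, and_assoc]

noncomputable def step (R T : ℝ) (Y M : ℕ → ℝ) (v : ℕ) : ℕ :=
  if 0 < backIndex Y T v ∧ M (backIndex Y T v) * Y (backIndex Y T v + 1) ≤ R / T then
    backIndex Y T v
  else backIndex Y R v

theorem step_zero : step R T Y M 0 = 0 := by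
  simp [step, backIndex]

theorem step_lt (hR : 1 < R) (hRT : R ≤ T) (hYpos : ∀ k, 0 < Y k) {v : ℕ} (hv : 0 < v) :
    step R T Y M v < v := by
  unfold step
  split_ifs
  · exact backIndex_lt (hR.trans_le hRT) hYpos hv
  · exact backIndex_lt hR hYpos hv

theorem lt_mul_step_succ (hR : 1 < R) (hRT : R ≤ T) (hYpos : ∀ k, 0 < Y k) (hY : StrictMono Y)
    (v : ℕ) : Y v < T * Y (step R T Y M v + 1) := by
  unfold step
  split_ifs
  · exact lt_mul_backIndex_succ (hR.le.trans hRT) hYpos hY v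
  · exact (lt_mul_backIndex_succ hR.le hYpos hY v).trans_le
      (mul_le_mul_of_nonneg_right hRT (hYpos _).le)

theorem finite_step_children (hR : 1 < R) (hRT : R ≤ T) (hYpos : ∀ k, 0 < Y k)
    (hY : StrictMono Y) (hYtop : Tendsto Y atTop atTop) (u : ℕ) :
    {c | step R T Y M c = u ∧ c ≠ u}.Finite := by
  have hlarge : ∀ᶠ c in cofinite, T * Y (u + 1) ≤ Y c :=
    Nat.cofinite_eq_atTop ▸ hYtop.eventually_ge_atTop _
  refine (eventually_cofinite.1 hlarge).subset ?_
  rintro c ⟨rfl, -⟩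
  exact not_le.2 (lt_mul_step_succ hR hRT hYpos hY c)

theorem step_spec (hR : 1 < R) (hRT : R ≤ T) (hYpos : ∀ k, 0 < Y k) (hMpos : ∀ k, 0 < M k)
    (hY : StrictMono Y) (hMY : ∀ i, M i * Y (i + 1) ≤ 1) {v : ℕ} (hv : 0 < step R T Y M v) :
    R * Y (step R T Y M v) ≤ Y v ∧ M (step R T Y M v) * Y v ≤ R := by
  unfold step at hv ⊢
  split_ifs at hv ⊢ with h
  · set b := backIndex Y T v
    have hnext := lt_mul_backIndex_succ (hR.le.trans hRT) hYpos hY v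
    refine ⟨(mul_le_mul_of_nonneg_right hRT (hYpos b).le).trans
      (mul_le_of_backIndex_ne_zero hv.ne'), ?_⟩
    calc M b * Y v ≤ M b * (T * Y (b + 1)) := mul_le_mul_of_nonneg_left hnext.le (hMpos b).le
      _ = T * (M b * Y (b + 1)) := by ring
      _ ≤ T * (R / T) := mul_le_mul_of_nonneg_left h.2 (by linarith)
      _ = R := mul_div_cancel₀ R (by linarith)
  · set b := backIndex Y R v
    have hnext := lt_mul_backIndex_succ hR.le hYpos hY v
    refine ⟨mul_le_of_backIndex_ne_zero hv.ne', ?_⟩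
    calc M b * Y v ≤ M b * (R * Y (b + 1)) := mul_le_mul_of_nonneg_left hnext.le (hMpos b).le
      _ = R * (M b * Y (b + 1)) := by ring
      _ ≤ R * 1 := mul_le_mul_of_nonneg_left (hMY b) (by linarith)
      _ = R := mul_one R

theorem backIndex_mem_badIndices_of_short {v n : ℕ} (hvn : v ≤ n)
    (hshort : ¬ T * Y (step R T Y M v) ≤ Y v) :
    backIndex Y T v ∈ insert 0 (badIndices R T Y M n) := by
  unfold step at hshort
  split_ifs at hshort with h
  · exact absurd (mul_le_of_backIndex_ne_zero h.1.ne') hshort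
  · rw [mem_insert, badIndices, mem_filter, mem_Icc]
    push Not at h
    rcases Nat.eq_zero_or_pos (backIndex Y T v) with h0 | h0
    · exact Or.inl h0
    · exact Or.inr ⟨⟨h0, (Nat.findGreatest_le v).trans hvn⟩, h h0⟩

theorem le_card_filter_add_mul_card_badIndices (hR : 1 < R) (hRT : R ≤ T) (hYpos : ∀ k, 0 < Y k)
    (hMpos : ∀ k, 0 < M k) (hY : StrictMono Y) (hMY : ∀ i, M i * Y (i + 1) ≤ 1)
    {φ : ℕ → ℕ} (hφmono : StrictMono φ) (hφ0 : ∀ i, 1 ≤ φ i)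
    (hφ : ∀ i, step R T Y M (φ (i + 1)) = φ i) {K : ℕ} (hK : T ≤ R ^ K) (k : ℕ) :
    k ≤ #{i ∈ range k | T * Y (φ i) ≤ Y (φ (i + 1))} + K * (#(badIndices R T Y M (φ k)) + 1) := by
  have hgrow (i : ℕ) : R * Y (φ (i + 1)) ≤ Y (φ (i + 1 + 1)) := by
    have := step_spec hR hRT hYpos hMpos hY hMY (v := φ (i + 2)) (by rw [hφ]; exact hφ0 _)
    rw [hφ] at this
    exact this.1
  have hmaps : ∀ i ∈ {i ∈ range k | ¬ T * Y (φ i) ≤ Y (φ (i + 1))},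
      backIndex Y T (φ (i + 1)) ∈ insert 0 (badIndices R T Y M (φ k)) := by
    intro i hi
    rw [mem_filter, mem_range] at hi
    exact backIndex_mem_badIndices_of_short (hφmono.monotone hi.1)
      (by rw [hφ]; exact hi.2)
  -- edges charged to the same `q` all end below `T * Y (q + 1)` and above `Y (q + 1)`
  have hfiber : ∀ q ∈ insert 0 (badIndices R T Y M (φ k)),
      #{i ∈ {i ∈ range k | ¬ T * Y (φ i) ≤ Y (φ (i + 1))} |
        backIndex Y T (φ (i + 1)) = q} ≤ K := by
    intro q _
    refine card_le_of_forall_lt_mul hR (fun i => hYpos _) hgrow hK fun i hi j hj => ?_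
    rw [mem_filter] at hi hj
    calc Y (φ (j + 1)) < T * Y (backIndex Y T (φ (j + 1)) + 1) :=
          lt_mul_backIndex_succ (hR.le.trans hRT) hYpos hY _
      _ = T * Y (backIndex Y T (φ (i + 1)) + 1) := by rw [hi.2, hj.2]
      _ ≤ T * Y (φ (i + 1)) := mul_le_mul_of_nonneg_left
          (hY.monotone (backIndex_lt (hR.trans_le hRT) hYpos (hφ0 _)))
          (by linarith)
  have hshort := card_le_mul_card_image_of_maps_to hmaps K hfiber
  have hsplit := card_filter_add_card_filter_not (s := range k)
    (p := fun i => T * Y (φ i) ≤ Y (φ (i + 1)))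
  rw [card_range] at hsplit
  have := Nat.mul_le_mul_left K (card_insert_le 0 (badIndices R T Y M (φ k)))
  omega

theorem mul_log_le_log_add (hR : 1 < R) (hRT : R ≤ T) (hYpos : ∀ k, 0 < Y k)
    (hMpos : ∀ k, 0 < M k) (hY : StrictMono Y) (hMY : ∀ i, M i * Y (i + 1) ≤ 1)
    {φ : ℕ → ℕ} (hφmono : StrictMono φ) (hφ0 : ∀ i, 1 ≤ φ i)
    (hφ : ∀ i, step R T Y M (φ (i + 1)) = φ i) {K : ℕ} (hK : T ≤ R ^ K) (k : ℕ) :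
    Real.log T * k ≤ Real.log (Y (φ k)) + (K * Real.log T - Real.log (Y (φ 0))) +
      K * Real.log T * #(badIndices R T Y M (φ k)) := by
  have hT0 : 0 < T := by linarith
  have hlogT : 0 < Real.log T := Real.log_pos (hR.trans_le hRT)
  have hcount : (k : ℝ) ≤ #{i ∈ range k | T * Y (φ i) ≤ Y (φ (i + 1))} +
      K * ((#(badIndices R T Y M (φ k)) : ℝ) + 1) := by
    exact_mod_cast le_card_filter_add_mul_card_badIndices hR hRT hYpos hMpos hY hMY hφmono hφ0
      hφ hK k
  have hlong := Real.log_le_log (mul_pos (pow_pos hT0 _) (hYpos _))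
    (pow_card_filter_mul_le (z := fun i => Y (φ i)) hT0.le (hY.monotone.comp hφmono.monotone) k)
  rw [Real.log_mul (pow_pos hT0 _).ne' (hYpos _).ne', Real.log_pow] at hlong
  nlinarith

theorem exists_strictMono_subseq (hR : 1 < R) (hRT : R ≤ T) (hYpos : ∀ k, 0 < Y k)
    (hMpos : ∀ k, 0 < M k) (hY : StrictMono Y) (hMY : ∀ i, M i * Y (i + 1) ≤ 1)
    (hYtop : Tendsto Y atTop atTop)
    (hdensity : Tendsto (fun k : ℕ =>
        ({i : ℕ | 1 ≤ i ∧ i ≤ k ∧ R / T < M i * Y (i + 1)}.ncard : ℝ) / Real.log (Y k))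
      atTop (𝓝 0)) :
    ∃ φ : ℕ → ℕ, StrictMono φ ∧ (∀ i, 1 ≤ φ i) ∧
      (∀ i, R * Y (φ i) ≤ Y (φ (i + 1))) ∧ (∀ i, M (φ i) * Y (φ (i + 1)) ≤ R) ∧
      limsup (fun k : ℕ => (k : ℝ) / Real.log (Y (φ k))) atTop ≤ 1 / Real.log T := by
  obtain ⟨ψ, hψ, hψ0, hψstep⟩ := exists_strictMono_parent_eq step_zero
    (fun v hv => step_lt hR hRT hYpos hv) (finite_step_children hR hRT hYpos hY hYtop)
  set φ := fun i => ψ (i + 1)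
  have hφmono : StrictMono φ := hψ.comp (strictMono_id.add_const 1)
  have hφ0 (i : ℕ) : 1 ≤ φ i := by
    have h := hψ i.succ_pos
    rwa [hψ0] at h
  have hedge (i : ℕ) := step_spec hR hRT hYpos hMpos hY hMY (v := φ (i + 1))
    (by rw [hψstep]; exact hφ0 i)
  simp only [φ, hψstep] at hedge
  obtain ⟨K, hK⟩ := pow_unbounded_of_one_lt T hR
  have hlog (k : ℕ) := mul_log_le_log_add hR hRT hYpos hMpos hY hMY hφmono hφ0
    (fun i => hψstep (i + 1)) hK.le k
  simp only [← ncard_setOf_eq_card_badIndices] at hlog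
  exact ⟨φ, hφmono, hφ0, fun i => (hedge i).1, fun i => (hedge i).2,
    limsup_div_le_of_mul_le (Real.log_pos (hR.trans_le hRT))
      (Real.tendsto_log_atTop.comp (hYtop.comp hφmono.tendsto_atTop))
      (hdensity.comp hφmono.tendsto_atTop) (fun k => k.cast_nonneg) hlog⟩

end BugeaudLaurent

theorem modified_bugeaud_laurent_general (R S : ℝ) (hR : 1 < R) (hRS : R < S)
    (Y M : ℕ → ℝ) (V : ℕ)
    (hYpos : ∀ k, 0 < Y k) (hMpos : ∀ k, 0 < M k)
    (hYmono : StrictMono Y)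
    (hMY : ∀ i, M i * Y (i + 1) ≤ 1)
    (hdouble : ∀ i, 2 * Y i ≤ Y (i + V))
    (hdensity : Filter.Tendsto (fun k : ℕ =>
        (({i : ℕ | 1 ≤ i ∧ i ≤ k ∧ R / S ^ 3 < M i * Y (i + 1)}.ncard : ℝ) /
          Real.log (Y k)))
      Filter.atTop (𝓝 0)) :
    ∃ φ : ℕ → ℕ, StrictMono φ ∧ (∀ i, 1 ≤ φ i) ∧
      (∀ i, R * Y (φ i) ≤ Y (φ (i + 1))) ∧
      (∀ i, M (φ i) * Y (φ (i + 1)) ≤ R) ∧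
      Filter.limsup (fun k : ℕ => (k : ℝ) / Real.log (Y (φ k))) Filter.atTop ≤
        1 / Real.log S := by
  have hS : 1 < S := hR.trans hRS
  obtain ⟨φ, hφmono, hφ0, hgrow, hbound, hlimsup⟩ :=
    BugeaudLaurent.exists_strictMono_subseq hR (hRS.le.trans (le_self_pow₀ hS.le three_ne_zero))
      hYpos hMpos hYmono hMY (tendsto_atTop_of_two_mul_le (hYpos 0) hYmono.monotone hdouble)
      hdensity
  refine ⟨φ, hφmono, hφ0, hgrow, hbound, hlimsup.trans ?_⟩
  have hlogS := Real.log_pos hS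
  rw [Real.log_pow]
  exact one_div_le_one_div_of_le hlogS (by push_cast; linarith)

/-- Modified Bugeaud–Laurent subsequence extraction: given sequences `(Y_i)` increasing,
`(M_i)` decreasing with `M_i Y_{i+1} ≤ 1`, doubling `Y_{i+V} ≥ 2Y_i`, and sparsity on
logarithmic average of indices with `M_i Y_{i+1} > R/S³`, there is an increasing `φ`
with `Y_{φ(i+1)} ≥ R Y_{φ(i)}`, `M_{φ(i)} Y_{φ(i+1)} ≤ R`, and
`limsup k / log Y_{φ(k)} ≤ 1/log S`. -/
theorem modified_bugeaud_laurent (R S : ℝ) (hR : 1 < R) (hRS : R < S)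
    (Y M : ℕ → ℝ) (V : ℕ) (hV : 0 < V)
    (hYpos : ∀ k, 0 < Y k) (hMpos : ∀ k, 0 < M k)
    (hYmono : StrictMono Y) (hManti : StrictAnti M)
    (hMY : ∀ i, M i * Y (i + 1) ≤ 1)
    (hdouble : ∀ i, 2 * Y i ≤ Y (i + V))
    (hdensity : Filter.Tendsto (fun k : ℕ =>
        (({i : ℕ | 1 ≤ i ∧ i ≤ k ∧ R / S ^ 3 < M i * Y (i + 1)}.ncard : ℝ) /
          Real.log (Y k)))
      Filter.atTop (𝓝 0)) :
    ∃ φ : ℕ → ℕ, StrictMono φ ∧ (∀ i, 1 ≤ φ i) ∧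
      (∀ i, R * Y (φ i) ≤ Y (φ (i + 1))) ∧
      (∀ i, M (φ i) * Y (φ (i + 1)) ≤ R) ∧
      Filter.limsup (fun k : ℕ => (k : ℝ) / Real.log (Y (φ k))) Filter.atTop ≤
        1 / Real.log S :=
  modified_bugeaud_laurent_general R S hR hRS Y M V hYpos hMpos hYmono hMY hdouble hdensity
end
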